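/- arXiv:2201.02499 — 6 statements merged into one kernel-verified Lean document; each statement's English description precedes it below -/
import Mathlib

section
/- Let a, b be positive integers and let D be the (a+b+3)×(a+b+3) distance matrix of the extended double star T(a,b) (the tree formed by joining the centers of the stars K_{1,a} and K_{1,b} each by an edge to a common new vertex). Then the characteristic polynomial det(D − λI) equals (−λ−2)^{a+b−2} · p_{a,b}(λ), where p_{a,b}(λ) = 16 + 8a + 8b + (40 + 36a + 36b + 8ab)λ + (28 + 44a + 44b + 24ab)λ² + (2 + 18a + 18b + 12ab)λ³ + (−4 + 2a + 2b)λ⁴ − λ⁵. -/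
open Polynomial Matrix

/-- Adjacency-generating relation for the extended double star `T(a,b)`:
vertex `inl 0` and `inl 2` are the two star centers, `inl 1` is the common
central vertex, the `Fin a` vertices are leaves on center `inl 0` and the
`Fin b` vertices are leaves on center `inl 2`. -/
def EDSRel (a b : ℕ) :
    (Fin 3 ⊕ (Fin a ⊕ Fin b)) → (Fin 3 ⊕ (Fin a ⊕ Fin b)) → Prop
  | Sum.inl c, Sum.inl m => (c = 0 ∧ m = 1) ∨ (c = 2 ∧ m = 1)
  | Sum.inr (Sum.inl _), Sum.inl c => c = 0
  | Sum.inr (Sum.inr _), Sum.inl c => c = 2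
  | _, _ => False

/-- The extended double star `T(a,b)`. -/
def extendedDoubleStar (a b : ℕ) : SimpleGraph (Fin 3 ⊕ (Fin a ⊕ Fin b)) :=
  SimpleGraph.fromRel (EDSRel a b)

/-- The distance matrix of `T(a,b)` (an `(a+b+3) × (a+b+3)` real matrix). -/
noncomputable def distMatrix (a b : ℕ) :
    Matrix (Fin 3 ⊕ (Fin a ⊕ Fin b)) (Fin 3 ⊕ (Fin a ⊕ Fin b)) ℝ :=
  fun u v => ((extendedDoubleStar a b).dist u v : ℝ)

namespace EDS
variable {a b : ℕ}

/-- level function -/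
def lvl : (Fin 3 ⊕ (Fin a ⊕ Fin b)) → ℤ
  | Sum.inl c => if c = 0 then 1 else if c = 1 then 2 else 3
  | Sum.inr (Sum.inl _) => 0
  | Sum.inr (Sum.inr _) => 4

lemma adj_c1m : (extendedDoubleStar a b).Adj (Sum.inl 0) (Sum.inl 1) := by
  rw [extendedDoubleStar, SimpleGraph.fromRel_adj]
  exact ⟨by simp, Or.inl (Or.inl ⟨rfl, rfl⟩)⟩

lemma adj_c2m : (extendedDoubleStar a b).Adj (Sum.inl 2) (Sum.inl 1) := by
  rw [extendedDoubleStar, SimpleGraph.fromRel_adj]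
  exact ⟨by simp, Or.inl (Or.inr ⟨rfl, rfl⟩)⟩

lemma adj_A (i : Fin a) : (extendedDoubleStar a b).Adj (Sum.inr (Sum.inl i)) (Sum.inl 0) := by
  rw [extendedDoubleStar, SimpleGraph.fromRel_adj]
  exact ⟨by simp, Or.inl rfl⟩

lemma adj_B (j : Fin b) : (extendedDoubleStar a b).Adj (Sum.inr (Sum.inr j)) (Sum.inl 2) := by
  rw [extendedDoubleStar, SimpleGraph.fromRel_adj]
  exact ⟨by simp, Or.inl rfl⟩

lemma adj_lvl {u v} (h : (extendedDoubleStar a b).Adj u v) : (lvl u - lvl v).natAbs = 1 := by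
  rw [extendedDoubleStar, SimpleGraph.fromRel_adj] at h
  obtain ⟨hne, h | h⟩ := h <;>
    rcases u with (u | u | u) <;> rcases v with (v | v | v) <;>
      simp only [EDSRel] at h <;>
      first
        | (rcases h with ⟨rfl, rfl⟩ | ⟨rfl, rfl⟩ <;> simp [lvl])
        | exact absurd h (by simp)
        | (subst h; simp [lvl]; omega)
        | (simp [lvl]; omega)

lemma walk_lb {u v} (p : (extendedDoubleStar a b).Walk u v) :
    (lvl u - lvl v).natAbs ≤ p.length := by
  induction p with
  | nil => simp
  | cons h p ih =>
    have h1 := adj_lvl h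
    rw [SimpleGraph.Walk.length_cons]
    omega

open SimpleGraph Walk

lemma fin3_cases (c : Fin 3) : c = 0 ∨ c = 1 ∨ c = 2 := by
  fin_cases c <;> simp

lemma dist_eq_of_walk {u v : Fin 3 ⊕ (Fin a ⊕ Fin b)} (k : ℕ)
    (w : (extendedDoubleStar a b).Walk u v) (hw : w.length = k)
    (hk : (lvl u - lvl v).natAbs = k) : (extendedDoubleStar a b).dist u v = k := by
  have h1 : (extendedDoubleStar a b).dist u v ≤ k := hw ▸ SimpleGraph.dist_le w
  obtain ⟨p, hp⟩ := w.reachable.exists_walk_length_eq_dist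
  have h2 := walk_lb p
  omega

lemma dist_eq_two' {u v : Fin 3 ⊕ (Fin a ⊕ Fin b)} (hne : u ≠ v) (hl : lvl u = lvl v)
    (w : (extendedDoubleStar a b).Walk u v) (hw : w.length = 2) :
    (extendedDoubleStar a b).dist u v = 2 := by
  have h1 : (extendedDoubleStar a b).dist u v ≤ 2 := hw ▸ SimpleGraph.dist_le w
  have h0 : (extendedDoubleStar a b).dist u v ≠ 0 :=
    SimpleGraph.dist_ne_zero_iff_ne_and_reachable.mpr ⟨hne, w.reachable⟩
  have hA : (extendedDoubleStar a b).dist u v ≠ 1 := by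
    intro h
    have := adj_lvl (SimpleGraph.dist_eq_one_iff_adj.mp h)
    omega
  omega

lemma fin3_20 : (2:Fin 3) ≠ 0 := by decide
lemma fin3_21 : (2:Fin 3) ≠ 1 := by decide

lemma dist_eq (u v : Fin 3 ⊕ (Fin a ⊕ Fin b)) :
    (extendedDoubleStar a b).dist u v =
      if u = v then 0 else if lvl u = lvl v then 2 else (lvl u - lvl v).natAbs := by
  rcases eq_or_ne u v with rfl | hne
  · simp [SimpleGraph.dist_self]
  rw [if_neg hne]
  rcases u with (c | i | i) <;> rcases v with (c' | j | j)
  · obtain rfl | rfl | rfl := fin3_cases c <;> obtain rfl | rfl | rfl := fin3_cases c' <;>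
      norm_num [lvl, fin3_20, fin3_21]
    · exact absurd rfl hne
    · exact adj_c1m
    · exact dist_eq_of_walk 2 (cons adj_c1m (cons adj_c2m.symm nil)) (by simp) (by simp only [lvl]; decide)
    · exact adj_c1m.symm
    · exact absurd rfl hne
    · exact adj_c2m.symm
    · exact dist_eq_of_walk 2 (cons adj_c2m (cons adj_c1m.symm nil)) (by simp) (by simp only [lvl]; decide)
    · exact adj_c2m
    · exact absurd rfl hne
  · obtain rfl | rfl | rfl := fin3_cases c <;> norm_num [lvl, fin3_20, fin3_21]
    · exact (adj_A j).symm
    · exact dist_eq_of_walk 2 (cons adj_c1m.symm (cons (adj_A j).symm nil)) (by simp)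
        (by simp only [lvl]; decide)
    · exact dist_eq_of_walk 3 (cons adj_c2m (cons adj_c1m.symm (cons (adj_A j).symm nil)))
        (by simp) (by simp only [lvl]; decide)
  · obtain rfl | rfl | rfl := fin3_cases c <;> norm_num [lvl, fin3_20, fin3_21]
    · exact dist_eq_of_walk 3 (cons adj_c1m (cons adj_c2m.symm (cons (adj_B j).symm nil)))
        (by simp) (by simp only [lvl]; decide)
    · exact dist_eq_of_walk 2 (cons adj_c2m.symm (cons (adj_B j).symm nil)) (by simp)
        (by simp only [lvl]; decide)
    · exact (adj_B j).symm
  · obtain rfl | rfl | rfl := fin3_cases c' <;> norm_num [lvl, fin3_20, fin3_21]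
    · exact adj_A i
    · exact dist_eq_of_walk 2 (cons (adj_A i) (cons adj_c1m nil)) (by simp) (by simp only [lvl]; decide)
    · exact dist_eq_of_walk 3 (cons (adj_A i) (cons adj_c1m (cons adj_c2m.symm nil))) (by simp)
        (by simp only [lvl]; decide)
  · norm_num [lvl, fin3_20, fin3_21]
    exact dist_eq_two' hne rfl (cons (adj_A i) (cons (adj_A j).symm nil)) (by simp)
  · norm_num [lvl, fin3_20, fin3_21]
    exact dist_eq_of_walk 4
      (cons (adj_A i) (cons adj_c1m (cons adj_c2m.symm (cons (adj_B j).symm nil)))) (by simp)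
      (by simp only [lvl]; decide)
  · obtain rfl | rfl | rfl := fin3_cases c' <;> norm_num [lvl, fin3_20, fin3_21]
    · exact dist_eq_of_walk 3 (cons (adj_B i) (cons adj_c2m (cons adj_c1m.symm nil))) (by simp)
        (by simp only [lvl]; decide)
    · exact dist_eq_of_walk 2 (cons (adj_B i) (cons adj_c2m nil)) (by simp) (by simp only [lvl]; decide)
    · exact adj_B i
  · norm_num [lvl, fin3_20, fin3_21]
    exact dist_eq_of_walk 4
      (cons (adj_B i) (cons adj_c2m (cons adj_c1m.symm (cons (adj_A j).symm nil)))) (by simp)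
      (by simp only [lvl]; decide)
  · norm_num [lvl, fin3_20, fin3_21]
    exact dist_eq_two' hne rfl (cons (adj_B i) (cons (adj_B j).symm nil)) (by simp)

theorem my_det_fin_four {R : Type*} [CommRing R] (A : Matrix (Fin 4) (Fin 4) R) :
    A.det = A 0 0*A 1 1*A 2 2*A 3 3 - A 0 0*A 1 1*A 2 3*A 3 2 - A 0 0*A 1 2*A 2 1*A 3 3 + A 0 0*A 1 2*A 2 3*A 3 1 + A 0 0*A 1 3*A 2 1*A 3 2 - A 0 0*A 1 3*A 2 2*A 3 1 - A 0 1*A 1 0*A 2 2*A 3 3 + A 0 1*A 1 0*A 2 3*A 3 2 + A 0 1*A 1 2*A 2 0*A 3 3 - A 0 1*A 1 2*A 2 3*A 3 0 - A 0 1*A 1 3*A 2 0*A 3 2 + A 0 1*A 1 3*A 2 2*A 3 0 + A 0 2*A 1 0*A 2 1*A 3 3 - A 0 2*A 1 0*A 2 3*A 3 1 - A 0 2*A 1 1*A 2 0*A 3 3 + A 0 2*A 1 1*A 2 3*A 3 0 + A 0 2*A 1 3*A 2 0*A 3 1 - A 0 2*A 1 3*A 2 1*A 3 0 - A 0 3*A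 1 0*A 2 1*A 3 2 + A 0 3*A 1 0*A 2 2*A 3 1 + A 0 3*A 1 1*A 2 0*A 3 2 - A 0 3*A 1 1*A 2 2*A 3 0 - A 0 3*A 1 2*A 2 0*A 3 1 + A 0 3*A 1 2*A 2 1*A 3 0 := by
  rw [Matrix.det_succ_row_zero, Fin.sum_univ_four]
  norm_num [Matrix.det_fin_three, Matrix.submatrix_apply, Fin.succAbove, Fin.lt_def,
    show Fin.succ (2 : Fin 3) = 3 from rfl, Fin.succ_zero_eq_one, Fin.succ_one_eq_two,
    show ((3:Fin 4):ℕ) = 3 from rfl, show Fin.castSucc (2:Fin 3) = 2 from rfl]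
  ring

theorem my_det_fin_five {R : Type*} [CommRing R] (A : Matrix (Fin 5) (Fin 5) R) :
    A.det = A 0 0*A 1 1*A 2 2*A 3 3*A 4 4 - A 0 0*A 1 1*A 2 2*A 3 4*A 4 3 - A 0 0*A 1 1*A 2 3*A 3 2*A 4 4 + A 0 0*A 1 1*A 2 3*A 3 4*A 4 2 + A 0 0*A 1 1*A 2 4*A 3 2*A 4 3 - A 0 0*A 1 1*A 2 4*A 3 3*A 4 2 - A 0 0*A 1 2*A 2 1*A 3 3*A 4 4 + A 0 0*A 1 2*A 2 1*A 3 4*A 4 3 + A 0 0*A 1 2*A 2 3*A 3 1*A 4 4 - A 0 0*A 1 2*A 2 3*A 3 4*A 4 1 - A 0 0*A 1 2*A 2 4*A 3 1*A 4 3 + A 0 0*A 1 2*A 2 4*A 3 3*A 4 1 + A 0 0*A 1 3*A 2 1*A 3 2*A 4 4 - A 0 0*A 1 3*A 2 1*A 3 4*A 4 2 - A 0 0*A 1 3*A 2 2*A 3 1*A 4 4 + A 0 0*A 1 3*A 2 2*A 3 4*A 4 1 + A 0 0*A 1 3*A 2 4*A 3 1*A 4 2 - A 0 0*A 1 3*A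 2 4*A 3 2*A 4 1 - A 0 0*A 1 4*A 2 1*A 3 2*A 4 3 + A 0 0*A 1 4*A 2 1*A 3 3*A 4 2 + A 0 0*A 1 4*A 2 2*A 3 1*A 4 3 - A 0 0*A 1 4*A 2 2*A 3 3*A 4 1 - A 0 0*A 1 4*A 2 3*A 3 1*A 4 2 + A 0 0*A 1 4*A 2 3*A 3 2*A 4 1 - A 0 1*A 1 0*A 2 2*A 3 3*A 4 4 + A 0 1*A 1 0*A 2 2*A 3 4*A 4 3 + A 0 1*A 1 0*A 2 3*A 3 2*A 4 4 - A 0 1*A 1 0*A 2 3*A 3 4*A 4 2 - A 0 1*A 1 0*A 2 4*A 3 2*A 4 3 + A 0 1*A 1 0*A 2 4*A 3 3*A 4 2 + A 0 1*A 1 2*A 2 0*A 3 3*A 4 4 - A 0 1*A 1 2*A 2 0*A 3 4*A 4 3 - A 0 1*A 1 2*A 2 3*A 3 0*A 4 4 + A 0 1*A 1 2*A 2 3*A 3 4*A 4 0 + A 0 1*A 1 2*A 2 4*A 3 0*A 4 3 - A 0 1*A 1 2*A 2 4*A 3 3*A 4 0 - A 0 1*A 1 3*A 2 0*A 3 2*A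 4 4 + A 0 1*A 1 3*A 2 0*A 3 4*A 4 2 + A 0 1*A 1 3*A 2 2*A 3 0*A 4 4 - A 0 1*A 1 3*A 2 2*A 3 4*A 4 0 - A 0 1*A 1 3*A 2 4*A 3 0*A 4 2 + A 0 1*A 1 3*A 2 4*A 3 2*A 4 0 + A 0 1*A 1 4*A 2 0*A 3 2*A 4 3 - A 0 1*A 1 4*A 2 0*A 3 3*A 4 2 - A 0 1*A 1 4*A 2 2*A 3 0*A 4 3 + A 0 1*A 1 4*A 2 2*A 3 3*A 4 0 + A 0 1*A 1 4*A 2 3*A 3 0*A 4 2 - A 0 1*A 1 4*A 2 3*A 3 2*A 4 0 + A 0 2*A 1 0*A 2 1*A 3 3*A 4 4 - A 0 2*A 1 0*A 2 1*A 3 4*A 4 3 - A 0 2*A 1 0*A 2 3*A 3 1*A 4 4 + A 0 2*A 1 0*A 2 3*A 3 4*A 4 1 + A 0 2*A 1 0*A 2 4*A 3 1*A 4 3 - A 0 2*A 1 0*A 2 4*A 3 3*A 4 1 - A 0 2*A 1 1*A 2 0*A 3 3*A 4 4 + A 0 2*A 1 1*A 2 0*A 3 4*A 4 3 + A 0 2*A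 1 1*A 2 3*A 3 0*A 4 4 - A 0 2*A 1 1*A 2 3*A 3 4*A 4 0 - A 0 2*A 1 1*A 2 4*A 3 0*A 4 3 + A 0 2*A 1 1*A 2 4*A 3 3*A 4 0 + A 0 2*A 1 3*A 2 0*A 3 1*A 4 4 - A 0 2*A 1 3*A 2 0*A 3 4*A 4 1 - A 0 2*A 1 3*A 2 1*A 3 0*A 4 4 + A 0 2*A 1 3*A 2 1*A 3 4*A 4 0 + A 0 2*A 1 3*A 2 4*A 3 0*A 4 1 - A 0 2*A 1 3*A 2 4*A 3 1*A 4 0 - A 0 2*A 1 4*A 2 0*A 3 1*A 4 3 + A 0 2*A 1 4*A 2 0*A 3 3*A 4 1 + A 0 2*A 1 4*A 2 1*A 3 0*A 4 3 - A 0 2*A 1 4*A 2 1*A 3 3*A 4 0 - A 0 2*A 1 4*A 2 3*A 3 0*A 4 1 + A 0 2*A 1 4*A 2 3*A 3 1*A 4 0 - A 0 3*A 1 0*A 2 1*A 3 2*A 4 4 + A 0 3*A 1 0*A 2 1*A 3 4*A 4 2 + A 0 3*A 1 0*A 2 2*A 3 1*A 4 4 - A 0 3*A 1 0*A 2 2*A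 3 4*A 4 1 - A 0 3*A 1 0*A 2 4*A 3 1*A 4 2 + A 0 3*A 1 0*A 2 4*A 3 2*A 4 1 + A 0 3*A 1 1*A 2 0*A 3 2*A 4 4 - A 0 3*A 1 1*A 2 0*A 3 4*A 4 2 - A 0 3*A 1 1*A 2 2*A 3 0*A 4 4 + A 0 3*A 1 1*A 2 2*A 3 4*A 4 0 + A 0 3*A 1 1*A 2 4*A 3 0*A 4 2 - A 0 3*A 1 1*A 2 4*A 3 2*A 4 0 - A 0 3*A 1 2*A 2 0*A 3 1*A 4 4 + A 0 3*A 1 2*A 2 0*A 3 4*A 4 1 + A 0 3*A 1 2*A 2 1*A 3 0*A 4 4 - A 0 3*A 1 2*A 2 1*A 3 4*A 4 0 - A 0 3*A 1 2*A 2 4*A 3 0*A 4 1 + A 0 3*A 1 2*A 2 4*A 3 1*A 4 0 + A 0 3*A 1 4*A 2 0*A 3 1*A 4 2 - A 0 3*A 1 4*A 2 0*A 3 2*A 4 1 - A 0 3*A 1 4*A 2 1*A 3 0*A 4 2 + A 0 3*A 1 4*A 2 1*A 3 2*A 4 0 + A 0 3*A 1 4*A 2 2*A 3 0*A 4 1 -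 A 0 3*A 1 4*A 2 2*A 3 1*A 4 0 + A 0 4*A 1 0*A 2 1*A 3 2*A 4 3 - A 0 4*A 1 0*A 2 1*A 3 3*A 4 2 - A 0 4*A 1 0*A 2 2*A 3 1*A 4 3 + A 0 4*A 1 0*A 2 2*A 3 3*A 4 1 + A 0 4*A 1 0*A 2 3*A 3 1*A 4 2 - A 0 4*A 1 0*A 2 3*A 3 2*A 4 1 - A 0 4*A 1 1*A 2 0*A 3 2*A 4 3 + A 0 4*A 1 1*A 2 0*A 3 3*A 4 2 + A 0 4*A 1 1*A 2 2*A 3 0*A 4 3 - A 0 4*A 1 1*A 2 2*A 3 3*A 4 0 - A 0 4*A 1 1*A 2 3*A 3 0*A 4 2 + A 0 4*A 1 1*A 2 3*A 3 2*A 4 0 + A 0 4*A 1 2*A 2 0*A 3 1*A 4 3 - A 0 4*A 1 2*A 2 0*A 3 3*A 4 1 - A 0 4*A 1 2*A 2 1*A 3 0*A 4 3 + A 0 4*A 1 2*A 2 1*A 3 3*A 4 0 + A 0 4*A 1 2*A 2 3*A 3 0*A 4 1 - A 0 4*A 1 2*A 2 3*A 3 1*A 4 0 - A 0 4*A 1 3*A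 2 0*A 3 1*A 4 2 + A 0 4*A 1 3*A 2 0*A 3 2*A 4 1 + A 0 4*A 1 3*A 2 1*A 3 0*A 4 2 - A 0 4*A 1 3*A 2 1*A 3 2*A 4 0 - A 0 4*A 1 3*A 2 2*A 3 0*A 4 1 + A 0 4*A 1 3*A 2 2*A 3 1*A 4 0 := by
  rw [Matrix.det_succ_row_zero, Fin.sum_univ_five]
  norm_num [my_det_fin_four, Matrix.submatrix_apply, Fin.succAbove, Fin.lt_def,
    show Fin.succ (2 : Fin 4) = 3 from rfl, show Fin.succ (3 : Fin 4) = 4 from rfl,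
    Fin.succ_zero_eq_one, Fin.succ_one_eq_two,
    show ((4:Fin 5):ℕ) = 4 from rfl, show ((3:Fin 5):ℕ) = 3 from rfl,
    show Fin.castSucc (3:Fin 4) = 3 from rfl, show Fin.castSucc (2:Fin 4) = 2 from rfl]
  ring

noncomputable section LA

variable (a' b' : ℕ) (lam : ℝ)

def coreEquiv : (Fin 5 ⊕ (Fin a' ⊕ Fin b')) ≃ (Fin 3 ⊕ (Fin (a' + 1) ⊕ Fin (b' + 1))) where
  toFun := Sum.elim
    (![Sum.inl 0, Sum.inl 1, Sum.inl 2,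
       Sum.inr (Sum.inl (Fin.last a')), Sum.inr (Sum.inr (Fin.last b'))])
    (Sum.elim (fun j => Sum.inr (Sum.inl j.castSucc)) (fun k => Sum.inr (Sum.inr k.castSucc)))
  invFun := Sum.elim (fun c => Sum.inl (Fin.castLE (by omega) c))
    (Sum.elim (fun x => Fin.lastCases (Sum.inl 3) (fun j => Sum.inr (Sum.inl j)) x)
      (fun x => Fin.lastCases (Sum.inl 4) (fun k => Sum.inr (Sum.inr k)) x))
  left_inv := by
    rintro (c | (j | k))
    · fin_cases c <;> simp [Fin.ext_iff]
    · simp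
    · simp
  right_inv := by
    rintro (c | (x | x))
    · fin_cases c <;> rfl
    · cases x using Fin.lastCases with
      | last => simp
      | cast j => simp
    · cases x using Fin.lastCases with
      | last => simp
      | cast j => simp

def A0 : Matrix (Fin 5) (Fin 5) ℝ :=
  !![-lam,1,2,1,3; 1,-lam,1,2,2; 2,1,-lam,3,1; 1,2,3,-lam,4; 3,2,1,4,-lam]

def B0 : Matrix (Fin 5) (Fin a' ⊕ Fin b') ℝ :=
  fun i => Sum.elim (fun _ => ![(1:ℝ),2,3,2,4] i) (fun _ => ![(3:ℝ),2,1,4,2] i)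

def C0 : Matrix (Fin a' ⊕ Fin b') (Fin 5) ℝ :=
  fun r i => Sum.elim (fun _ => ![(1:ℝ),2,3,2,4] i) (fun _ => ![(3:ℝ),2,1,4,2] i) r

def D0 : Matrix (Fin a' ⊕ Fin b') (Fin a' ⊕ Fin b') ℝ :=
  fun r s =>
    match r, s with
    | Sum.inl j, Sum.inl j' => if j = j' then -lam else 2
    | Sum.inl _, Sum.inr _ => 4
    | Sum.inr _, Sum.inl _ => 4
    | Sum.inr k, Sum.inr k' => if k = k' then -lam else 2

lemma block_eq :
    (distMatrix (a' + 1) (b' + 1) - lam • 1).submatrix (coreEquiv a' b') (coreEquiv a' b') =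
      fromBlocks (A0 lam) (B0 a' b') (C0 a' b') (D0 a' b' lam) := by
  ext u v
  have hca := fun (r : Fin a') => (Fin.castSucc_lt_last r).ne
  have hcb := fun (r : Fin b') => (Fin.castSucc_lt_last r).ne
  rcases u with (i | (r | r)) <;> rcases v with (i' | (r' | r'))
  · fin_cases i <;> fin_cases i' <;>
      simp [coreEquiv, distMatrix, dist_eq, lvl, A0, Matrix.one_apply, fin3_20, fin3_21, Matrix.vecHead, Matrix.vecTail]
  · fin_cases i <;>
      simp [coreEquiv, distMatrix, dist_eq, lvl, B0, Matrix.one_apply, fin3_20, fin3_21,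
        (hca r').symm, (hca r')]
  · fin_cases i <;>
      simp [coreEquiv, distMatrix, dist_eq, lvl, B0, Matrix.one_apply, fin3_20, fin3_21,
        (hcb r').symm, (hcb r')]
  · fin_cases i' <;>
      simp [coreEquiv, distMatrix, dist_eq, lvl, C0, Matrix.one_apply, fin3_20, fin3_21,
        (hca r).symm, (hca r)]
  · simp [coreEquiv, distMatrix, dist_eq, lvl, D0, Matrix.one_apply, Fin.castSucc_inj]
    split <;> simp_all
  · simp [coreEquiv, distMatrix, dist_eq, lvl, D0, Matrix.one_apply]
  · fin_cases i' <;>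
      simp [coreEquiv, distMatrix, dist_eq, lvl, C0, Matrix.one_apply, fin3_20, fin3_21,
        (hcb r).symm, (hcb r)]
  · simp [coreEquiv, distMatrix, dist_eq, lvl, D0, Matrix.one_apply]
  · simp [coreEquiv, distMatrix, dist_eq, lvl, D0, Matrix.one_apply, Fin.castSucc_inj]
    split <;> simp_all

end LA

section LA2

variable {a' b' : ℕ} (lam : ℝ)

lemma sum_if {n : ℕ} (j : Fin n) (x y : ℝ) :
    ∑ j' : Fin n, (if j' = j then x else y) = (x - y) + y * n := by
  have h : ∀ j' : Fin n, (if j' = j then x else y) = (if j' = j then x - y else 0) + y := by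
    intro j'; split <;> ring
  rw [Finset.sum_congr rfl fun j' _ => h j', Finset.sum_add_distrib,
    Finset.sum_ite_eq' Finset.univ j fun _ => x - y]
  simp [mul_comm]

variable (a' b')

def NN : Matrix (Fin 5) (Fin a' ⊕ Fin b') ℝ :=
  fun i => Sum.elim (fun _ => if i = 3 then (-1:ℝ) else 0) (fun _ => if i = 4 then -1 else 0)

def PP : Matrix (Fin 5) (Fin 5) ℝ :=
  !![-lam,1,2,1,3; 1,-lam,1,2,2; 2,1,-lam,3,1;
     1+(a':ℝ), 2+2*a', 3+3*a', -lam+2*a', 4+4*a';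
     3+3*(b':ℝ), 2+2*b', 1+b', 4+4*b', -lam+2*b']

lemma key1 : C0 a' b' * NN a' b' + D0 a' b' lam =
    (-lam - 2) • (1 : Matrix (Fin a' ⊕ Fin b') (Fin a' ⊕ Fin b') ℝ) := by
  ext r s
  rcases r with r | r <;> rcases s with s | s <;>
    simp [Matrix.mul_apply, Matrix.one_apply, C0, NN, D0, Fin.sum_univ_five,
      Matrix.vecHead, Matrix.vecTail]
  · split <;> ring
  · split <;> ring

lemma key3 : A0 lam - NN a' b' * C0 a' b' = PP a' b' lam := by
  ext i i'
  fin_cases i <;> fin_cases i' <;>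
    simp [Matrix.mul_apply, A0, PP, NN, C0, Fintype.sum_sum_type,
      Matrix.vecHead, Matrix.vecTail] <;> ring

set_option maxHeartbeats 1000000 in
lemma key2 : (A0 lam - NN a' b' * C0 a' b') * NN a' b' + (B0 a' b' - NN a' b' * D0 a' b' lam)
    = 0 := by
  ext i r
  rcases r with r | r <;> fin_cases i <;>
    simp [Matrix.mul_apply, A0, B0, NN, C0, D0, Fintype.sum_sum_type, Fin.sum_univ_five,
      sum_if, Matrix.vecHead, Matrix.vecTail] <;> ring

set_option maxHeartbeats 1000000 in
lemma detPP : (PP a' b' lam).det =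
    16 + 8*((a':ℝ)+1) + 8*((b':ℝ)+1) + (40 + 36*((a':ℝ)+1) + 36*((b':ℝ)+1)
      + 8*((a':ℝ)+1)*((b':ℝ)+1)) * lam
    + (28 + 44*((a':ℝ)+1) + 44*((b':ℝ)+1) + 24*((a':ℝ)+1)*((b':ℝ)+1)) * lam^2
    + (2 + 18*((a':ℝ)+1) + 18*((b':ℝ)+1) + 12*((a':ℝ)+1)*((b':ℝ)+1)) * lam^3
    + (-4 + 2*((a':ℝ)+1) + 2*((b':ℝ)+1)) * lam^4 - lam^5 := by
  rw [my_det_fin_five]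
  simp only [PP]
  simp only [Matrix.of_apply, Matrix.cons_val]
  norm_num [Matrix.vecHead, Matrix.vecTail]
  ring

end LA2
end EDS

open EDS

theorem stmt_0 (a b : ℕ) (ha : 1 ≤ a) (hb : 1 ≤ b) (lam : ℝ) :
    (distMatrix a b - lam • 1).det =
      (-lam - 2) ^ (a + b - 2) *
        (16 + 8 * a + 8 * b + (40 + 36 * a + 36 * b + 8 * a * b) * lam +
          (28 + 44 * a + 44 * b + 24 * a * b) * lam ^ 2 +
          (2 + 18 * a + 18 * b + 12 * a * b) * lam ^ 3 +
          (-4 + 2 * a + 2 * b) * lam ^ 4 - lam ^ 5) := by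
  obtain ⟨a', rfl⟩ : ∃ a', a = a' + 1 := ⟨a - 1, by omega⟩
  obtain ⟨b', rfl⟩ : ∃ b', b = b' + 1 := ⟨b - 1, by omega⟩
  have hdet : (distMatrix (a' + 1) (b' + 1) - lam • 1).det =
      (fromBlocks (A0 lam) (B0 a' b') (C0 a' b') (D0 a' b' lam)).det := by
    rw [← block_eq]
    exact (Matrix.det_submatrix_equiv_self (coreEquiv a' b') _).symm
  have hSS : (fromBlocks 1 (-(NN a' b')) 0 1 : Matrix (Fin 5 ⊕ (Fin a' ⊕ Fin b'))
        (Fin 5 ⊕ (Fin a' ⊕ Fin b')) ℝ) * fromBlocks 1 (NN a' b') 0 1 = 1 := by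
    rw [Matrix.fromBlocks_multiply]
    simpa using Matrix.fromBlocks_one
  have hprod : (fromBlocks 1 (-(NN a' b')) 0 1) *
        fromBlocks (A0 lam) (B0 a' b') (C0 a' b') (D0 a' b' lam) *
        (fromBlocks 1 (NN a' b') 0 1) =
      fromBlocks (PP a' b' lam) 0 (C0 a' b')
        ((-lam - 2) • (1 : Matrix (Fin a' ⊕ Fin b') (Fin a' ⊕ Fin b') ℝ)) := by
    rw [Matrix.fromBlocks_multiply, Matrix.fromBlocks_multiply]
    simp only [Matrix.one_mul, Matrix.mul_one, Matrix.zero_mul, Matrix.mul_zero,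
      add_zero, zero_add, Matrix.neg_mul, ← sub_eq_add_neg]
    rw [key2, key1, key3]
  have hdets : (fromBlocks (A0 lam) (B0 a' b') (C0 a' b') (D0 a' b' lam)).det =
      (PP a' b' lam).det * (-lam - 2) ^ (a' + b') := by
    have h1 : (fromBlocks 1 (-(NN a' b')) 0 1 : Matrix (Fin 5 ⊕ (Fin a' ⊕ Fin b'))
        (Fin 5 ⊕ (Fin a' ⊕ Fin b')) ℝ).det * (fromBlocks 1 (NN a' b') 0 1 :
        Matrix (Fin 5 ⊕ (Fin a' ⊕ Fin b')) (Fin 5 ⊕ (Fin a' ⊕ Fin b')) ℝ).det = 1 := by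
      rw [← Matrix.det_mul, hSS, Matrix.det_one]
    calc (fromBlocks (A0 lam) (B0 a' b') (C0 a' b') (D0 a' b' lam)).det
        = (fromBlocks 1 (-(NN a' b')) 0 1 : Matrix (Fin 5 ⊕ (Fin a' ⊕ Fin b'))
            (Fin 5 ⊕ (Fin a' ⊕ Fin b')) ℝ).det *
            (fromBlocks (A0 lam) (B0 a' b') (C0 a' b') (D0 a' b' lam)).det *
            (fromBlocks 1 (NN a' b') 0 1 : Matrix (Fin 5 ⊕ (Fin a' ⊕ Fin b'))
            (Fin 5 ⊕ (Fin a' ⊕ Fin b')) ℝ).det := by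
          rw [mul_comm (Matrix.det _), mul_assoc, h1, mul_one]
      _ = ((fromBlocks 1 (-(NN a' b')) 0 1) *
            fromBlocks (A0 lam) (B0 a' b') (C0 a' b') (D0 a' b' lam) *
            (fromBlocks 1 (NN a' b') 0 1)).det := by
          rw [Matrix.det_mul, Matrix.det_mul]
      _ = (fromBlocks (PP a' b' lam) 0 (C0 a' b')
            ((-lam - 2) • (1 : Matrix (Fin a' ⊕ Fin b') (Fin a' ⊕ Fin b') ℝ))).det := by
          rw [hprod]
      _ = (PP a' b' lam).det * (-lam - 2) ^ (a' + b') := by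
          rw [Matrix.det_fromBlocks_zero₁₂, Matrix.det_smul, Matrix.det_one]
          simp [Fintype.card_sum]
  have hexp : a' + 1 + (b' + 1) - 2 = a' + b' := by omega
  rw [hdet, hdets, detPP, hexp]
  push_cast
  ring
end

section
/- In particular, −2 is an eigenvalue of the distance matrix of T(a,b) with multiplicity at least a+b−2, for all integers a,b ≥ 1. -/
open Polynomial Matrix

namespace EDSaux

variable {a b : ℕ}

def pot : (Fin 3 ⊕ (Fin a ⊕ Fin b)) → ℤ
  | Sum.inl c => if c = 0 then 1 else if c = 1 then 2 else 3
  | Sum.inr (Sum.inl _) => 0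
  | Sum.inr (Sum.inr _) => 4

lemma pot_rel {u v : Fin 3 ⊕ (Fin a ⊕ Fin b)} (h : EDSRel a b u v) :
    pot u ≤ pot v + 1 ∧ pot v ≤ pot u + 1 := by
  rcases u with c | (i | i) <;> rcases v with m | (j | j) <;>
    first
      | exact h.elim
      | (rcases h with ⟨hc, hm⟩ | ⟨hc, hm⟩ <;> subst hc <;> subst hm <;>
          norm_num [pot, Fin.ext_iff])
      | (subst h; norm_num [pot, Fin.ext_iff])

lemma pot_adj {u v : Fin 3 ⊕ (Fin a ⊕ Fin b)}
    (h : (extendedDoubleStar a b).Adj u v) :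
    pot u ≤ pot v + 1 ∧ pot v ≤ pot u + 1 := by
  rw [extendedDoubleStar, SimpleGraph.fromRel_adj] at h
  rcases h with ⟨-, h | h⟩
  · exact pot_rel h
  · exact (pot_rel h).symm

lemma pot_le_length {u v : Fin 3 ⊕ (Fin a ⊕ Fin b)}
    (p : (extendedDoubleStar a b).Walk u v) :
    pot u - pot v ≤ (p.length : ℤ) ∧ pot v - pot u ≤ (p.length : ℤ) := by
  induction p with
  | nil => simp
  | @cons x y z h q ih =>
    have h1 := pot_adj h
    rw [SimpleGraph.Walk.length_cons]
    push_cast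
    omega

lemma pot_le_dist {u v : Fin 3 ⊕ (Fin a ⊕ Fin b)}
    (hr : (extendedDoubleStar a b).Reachable u v) :
    pot u - pot v ≤ ((extendedDoubleStar a b).dist u v : ℤ) ∧
    pot v - pot u ≤ ((extendedDoubleStar a b).dist u v : ℤ) := by
  obtain ⟨p, hp⟩ := hr.exists_walk_length_eq_dist
  rw [← hp]; exact pot_le_length p

lemma adj01 : (extendedDoubleStar a b).Adj (Sum.inl 0) (Sum.inl 1) := by
  rw [extendedDoubleStar, SimpleGraph.fromRel_adj]
  exact ⟨by simp, Or.inl (Or.inl ⟨rfl, rfl⟩)⟩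

lemma adj21 : (extendedDoubleStar a b).Adj (Sum.inl 2) (Sum.inl 1) := by
  rw [extendedDoubleStar, SimpleGraph.fromRel_adj]
  exact ⟨by simp, Or.inl (Or.inr ⟨rfl, rfl⟩)⟩

lemma adja0 (i : Fin a) :
    (extendedDoubleStar a b).Adj (Sum.inr (Sum.inl i)) (Sum.inl 0) := by
  rw [extendedDoubleStar, SimpleGraph.fromRel_adj]
  exact ⟨by simp, Or.inl rfl⟩

lemma adjb2 (j : Fin b) :
    (extendedDoubleStar a b).Adj (Sum.inr (Sum.inr j)) (Sum.inl 2) := by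
  rw [extendedDoubleStar, SimpleGraph.fromRel_adj]
  exact ⟨by simp, Or.inl rfl⟩


open SimpleGraph in
lemma dist01 : (extendedDoubleStar a b).dist (Sum.inl 0) (Sum.inl 1) = 1 :=
  dist_eq_one_iff_adj.mpr adj01

open SimpleGraph in
lemma dist21 : (extendedDoubleStar a b).dist (Sum.inl 2) (Sum.inl 1) = 1 :=
  dist_eq_one_iff_adj.mpr adj21

open SimpleGraph in
lemma dista0 (i : Fin a) :
    (extendedDoubleStar a b).dist (Sum.inr (Sum.inl i)) (Sum.inl 0) = 1 :=
  dist_eq_one_iff_adj.mpr (adja0 i)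

open SimpleGraph in
lemma distb2 (j : Fin b) :
    (extendedDoubleStar a b).dist (Sum.inr (Sum.inr j)) (Sum.inl 2) = 1 :=
  dist_eq_one_iff_adj.mpr (adjb2 j)

open SimpleGraph in
lemma dist02 : (extendedDoubleStar a b).dist (Sum.inl 0) (Sum.inl 2) = 2 := by
  let p : (extendedDoubleStar a b).Walk (Sum.inl 0) (Sum.inl 2) :=
    .cons adj01 (.cons adj21.symm .nil)
  have h1 := dist_le p
  have h2 := (pot_le_dist ⟨p⟩).2
  simp only [p, Walk.length_cons, Walk.length_nil] at h1
  norm_num [pot] at h2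
  omega

open SimpleGraph in
lemma dista1 (i : Fin a) :
    (extendedDoubleStar a b).dist (Sum.inr (Sum.inl i)) (Sum.inl 1) = 2 := by
  let p : (extendedDoubleStar a b).Walk (Sum.inr (Sum.inl i)) (Sum.inl 1) :=
    .cons (adja0 i) (.cons adj01 .nil)
  have h1 := dist_le p
  have h2 := (pot_le_dist ⟨p⟩).2
  simp only [p, Walk.length_cons, Walk.length_nil] at h1
  norm_num [pot] at h2
  omega

open SimpleGraph in
lemma distb1 (j : Fin b) :
    (extendedDoubleStar a b).dist (Sum.inr (Sum.inr j)) (Sum.inl 1) = 2 := by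
  let p : (extendedDoubleStar a b).Walk (Sum.inr (Sum.inr j)) (Sum.inl 1) :=
    .cons (adjb2 j) (.cons adj21 .nil)
  have h1 := dist_le p
  have h2 := (pot_le_dist ⟨p⟩).1
  simp only [p, Walk.length_cons, Walk.length_nil] at h1
  norm_num [pot] at h2
  omega

open SimpleGraph in
lemma dista2 (i : Fin a) :
    (extendedDoubleStar a b).dist (Sum.inr (Sum.inl i)) (Sum.inl 2) = 3 := by
  let p : (extendedDoubleStar a b).Walk (Sum.inr (Sum.inl i)) (Sum.inl 2) :=
    .cons (adja0 i) (.cons adj01 (.cons adj21.symm .nil))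
  have h1 := dist_le p
  have h2 := (pot_le_dist ⟨p⟩).2
  simp only [p, Walk.length_cons, Walk.length_nil] at h1
  norm_num [pot] at h2
  omega

open SimpleGraph in
lemma distb0 (j : Fin b) :
    (extendedDoubleStar a b).dist (Sum.inr (Sum.inr j)) (Sum.inl 0) = 3 := by
  let p : (extendedDoubleStar a b).Walk (Sum.inr (Sum.inr j)) (Sum.inl 0) :=
    .cons (adjb2 j) (.cons adj21 (.cons adj01.symm .nil))
  have h1 := dist_le p
  have h2 := (pot_le_dist ⟨p⟩).1
  simp only [p, Walk.length_cons, Walk.length_nil] at h1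
  norm_num [pot] at h2
  omega

open SimpleGraph in
lemma distab (i : Fin a) (j : Fin b) :
    (extendedDoubleStar a b).dist (Sum.inr (Sum.inl i)) (Sum.inr (Sum.inr j)) = 4 := by
  let p : (extendedDoubleStar a b).Walk (Sum.inr (Sum.inl i)) (Sum.inr (Sum.inr j)) :=
    .cons (adja0 i) (.cons adj01 (.cons adj21.symm (.cons (adjb2 j).symm .nil)))
  have h1 := dist_le p
  have h2 := (pot_le_dist ⟨p⟩).2
  simp only [p, Walk.length_cons, Walk.length_nil] at h1
  norm_num [pot] at h2
  omega

open SimpleGraph in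
lemma distaa (i i' : Fin a) (h : i ≠ i') :
    (extendedDoubleStar a b).dist (Sum.inr (Sum.inl i)) (Sum.inr (Sum.inl i')) = 2 := by
  let p : (extendedDoubleStar a b).Walk (Sum.inr (Sum.inl i)) (Sum.inr (Sum.inl i')) :=
    .cons (adja0 i) (.cons (adja0 i').symm .nil)
  have h1 := dist_le p
  simp only [p, Walk.length_cons, Walk.length_nil] at h1
  have hne : (Sum.inr (Sum.inl i) : Fin 3 ⊕ (Fin a ⊕ Fin b)) ≠ Sum.inr (Sum.inl i') := by
    simpa using h
  have hpos := Reachable.pos_dist_of_ne ⟨p⟩ hne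
  have hnadj : ¬ (extendedDoubleStar a b).Adj (Sum.inr (Sum.inl i)) (Sum.inr (Sum.inl i')) := by
    rw [extendedDoubleStar, SimpleGraph.fromRel_adj]
    rintro ⟨-, h | h⟩ <;> exact h
  have h2 : (extendedDoubleStar a b).dist (Sum.inr (Sum.inl i)) (Sum.inr (Sum.inl i')) ≠ 1 :=
    fun hd => hnadj (dist_eq_one_iff_adj.mp hd)
  omega

open SimpleGraph in
lemma distbb (j j' : Fin b) (h : j ≠ j') :
    (extendedDoubleStar a b).dist (Sum.inr (Sum.inr j)) (Sum.inr (Sum.inr j')) = 2 := by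
  let p : (extendedDoubleStar a b).Walk (Sum.inr (Sum.inr j)) (Sum.inr (Sum.inr j')) :=
    .cons (adjb2 j) (.cons (adjb2 j').symm .nil)
  have h1 := dist_le p
  simp only [p, Walk.length_cons, Walk.length_nil] at h1
  have hne : (Sum.inr (Sum.inr j) : Fin 3 ⊕ (Fin a ⊕ Fin b)) ≠ Sum.inr (Sum.inr j') := by
    simpa using h
  have hpos := Reachable.pos_dist_of_ne ⟨p⟩ hne
  have hnadj : ¬ (extendedDoubleStar a b).Adj (Sum.inr (Sum.inr j)) (Sum.inr (Sum.inr j')) := by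
    rw [extendedDoubleStar, SimpleGraph.fromRel_adj]
    rintro ⟨-, h | h⟩ <;> exact h
  have h2 : (extendedDoubleStar a b).dist (Sum.inr (Sum.inr j)) (Sum.inr (Sum.inr j')) ≠ 1 :=
    fun hd => hnadj (dist_eq_one_iff_adj.mp hd)
  omega



noncomputable def Bm (a b : ℕ) :
    Matrix (Fin 3 ⊕ (Fin a ⊕ Fin b)) (Fin 3 ⊕ (Fin a ⊕ Fin b)) ℝ :=
  distMatrix a b + (2 : ℝ) • 1

lemma Bm_apply (u v : Fin 3 ⊕ (Fin a ⊕ Fin b)) :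
    Bm a b u v = ((extendedDoubleStar a b).dist u v : ℝ) + if u = v then 2 else 0 := by
  simp [Bm, distMatrix, Matrix.one_apply, mul_ite]

lemma Bm_aa (i i' : Fin a) :
    Bm a b (Sum.inr (Sum.inl i)) (Sum.inr (Sum.inl i')) = 2 := by
  rcases eq_or_ne i i' with rfl | h
  · simp [Bm_apply]
  · rw [Bm_apply, distaa i i' h]
    simp [h]

lemma Bm_bb (j j' : Fin b) :
    Bm a b (Sum.inr (Sum.inr j)) (Sum.inr (Sum.inr j')) = 2 := by
  rcases eq_or_ne j j' with rfl | h
  · simp [Bm_apply]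
  · rw [Bm_apply, distbb j j' h]
    simp [h]

def cls : (Fin 3 ⊕ (Fin a ⊕ Fin b)) → Fin 5
  | Sum.inl c => c.castLE (by omega)
  | Sum.inr (Sum.inl _) => 3
  | Sum.inr (Sum.inr _) => 4

def rep (ha : 0 < a) (hb : 0 < b) : Fin 5 → (Fin 3 ⊕ (Fin a ⊕ Fin b))
  | 0 => Sum.inl 0
  | 1 => Sum.inl 1
  | 2 => Sum.inl 2
  | 3 => Sum.inr (Sum.inl ⟨0, ha⟩)
  | 4 => Sum.inr (Sum.inr ⟨0, hb⟩)

lemma row_eq (ha : 0 < a) (hb : 0 < b) (u v : Fin 3 ⊕ (Fin a ⊕ Fin b)) :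
    Bm a b u v = Bm a b (rep ha hb (cls u)) v := by
  rcases u with c | (i | i)
  · have h : rep ha hb (cls (Sum.inl c : Fin 3 ⊕ (Fin a ⊕ Fin b))) = Sum.inl c := by fin_cases c <;> rfl
    rw [h]
  · have h : rep ha hb (cls (Sum.inr (Sum.inl i) : Fin 3 ⊕ (Fin a ⊕ Fin b)))
        = Sum.inr (Sum.inl ⟨0, ha⟩) := rfl
    rw [h]
    rcases v with m | (j | j)
    · fin_cases m <;> rw [Bm_apply, Bm_apply] <;>
        simp [dista0, dista1, dista2]
    · rw [Bm_aa, Bm_aa]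
    · rw [Bm_apply, Bm_apply]; simp [distab]
  · have h : rep ha hb (cls (Sum.inr (Sum.inr i) : Fin 3 ⊕ (Fin a ⊕ Fin b)))
        = Sum.inr (Sum.inr ⟨0, hb⟩) := rfl
    rw [h]
    rcases v with m | (j | j)
    · fin_cases m <;> rw [Bm_apply, Bm_apply] <;>
        simp [distb0, distb1, distb2]
    · rw [Bm_apply, Bm_apply]
      simp [SimpleGraph.dist_comm, distab]
    · rw [Bm_bb, Bm_bb]

lemma factor (ha : 0 < a) (hb : 0 < b) :
    Bm a b = (Matrix.of fun u (j : Fin 5) => if cls u = j then (1 : ℝ) else 0) *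
      (Matrix.of fun j v => Bm a b (rep ha hb j) v) := by
  ext u v
  rw [Matrix.mul_apply]
  simp only [Matrix.of_apply, ite_mul, one_mul, zero_mul]
  rw [Finset.sum_ite_eq Finset.univ (cls u) fun j => Bm a b (rep ha hb j) v]
  simp [← row_eq ha hb]

lemma rank_le (ha : 0 < a) (hb : 0 < b) : (Bm a b).rank ≤ 5 := by
  rw [factor ha hb]
  refine (Matrix.rank_mul_le_left _ _).trans ?_
  exact (Matrix.rank_le_card_width _).trans (by simp)


lemma charpoly_Bm_comp (a b : ℕ) :
    (Bm a b).charpoly = (distMatrix a b).charpoly.comp (X - C 2) := by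
  have hmap : charmatrix (Bm a b) =
      (Polynomial.aeval (X - C (2:ℝ)) : ℝ[X] →ₐ[ℝ] ℝ[X]).mapMatrix
        (charmatrix (distMatrix a b)) := by
    ext i j
    rcases eq_or_ne i j with rfl | h
    · rw [charmatrix_apply_eq, AlgHom.mapMatrix_apply, Matrix.map_apply, charmatrix_apply_eq]
      have : Bm a b i i = distMatrix a b i i + 2 := by
        simp [Bm, Matrix.one_apply]
      rw [this]
      simp only [map_sub, Polynomial.aeval_X, Polynomial.aeval_C]
      simp only [Polynomial.algebraMap_eq, map_add]
      ring_nf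
    · rw [charmatrix_apply_ne _ _ _ h, AlgHom.mapMatrix_apply, Matrix.map_apply, charmatrix_apply_ne _ _ _ h]
      have : Bm a b i j = distMatrix a b i j := by
        simp [Bm, Matrix.one_apply, h]
      rw [this]
      simp only [map_neg, Polynomial.aeval_C, Polynomial.algebraMap_eq]
  rw [Matrix.charpoly, hmap, ← AlgHom.map_det, Polynomial.comp_eq_aeval]
  rfl

theorem stmt_1' (a b : ℕ) (ha : 1 ≤ a) (hb : 1 ≤ b) :
    (X + 2) ^ (a + b - 2) ∣ (distMatrix a b).charpoly := by
  classical
  -- Step A : `X ^ (a+b-2)` divides charpoly of `Bm`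
  set φ : Module.End ℝ ((Fin 3 ⊕ (Fin a ⊕ Fin b)) → ℝ) := (Bm a b).mulVecLin with hφ
  have hker : a + b - 2 ≤ Module.finrank ℝ (LinearMap.ker φ) := by
    have h1 := LinearMap.finrank_range_add_finrank_ker φ
    have h2 : Module.finrank ℝ (LinearMap.range φ) ≤ 5 := rank_le ha hb
    have h3 : Module.finrank ℝ ((Fin 3 ⊕ (Fin a ⊕ Fin b)) → ℝ) = 3 + (a + b) := by
      rw [Module.finrank_pi]; simp
    omega
  have hmax : a + b - 2 ≤ Module.finrank ℝ (φ.maxGenEigenspace 0) := by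
    refine hker.trans (Submodule.finrank_mono ?_)
    intro x hx
    rw [Module.End.mem_maxGenEigenspace]
    refine ⟨1, ?_⟩
    rw [LinearMap.mem_ker] at hx
    simpa using hx
  have htd : a + b - 2 ≤ (φ.charpoly).natTrailingDegree := by
    rw [← LinearMap.finrank_maxGenEigenspace_zero_eq]; exact hmax
  have hchar : φ.charpoly = (Bm a b).charpoly := by
    rw [← LinearMap.charpoly_toMatrix φ (Pi.basisFun ℝ (Fin 3 ⊕ (Fin a ⊕ Fin b))),
      LinearMap.toMatrix_eq_toMatrix']
    have : φ = Matrix.toLin' (Bm a b) := rfl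
    rw [this, LinearMap.toMatrix'_toLin']
  have hdvd : X ^ (a + b - 2) ∣ (Bm a b).charpoly := by
    rw [← hchar, Polynomial.X_pow_dvd_iff]
    intro d hd
    exact Polynomial.coeff_eq_zero_of_lt_natTrailingDegree (lt_of_lt_of_le hd htd)
  -- Step B : transport through the shift `X ↦ X + 2`
  obtain ⟨q, hq⟩ := hdvd
  have hA : (distMatrix a b).charpoly = ((Bm a b).charpoly).comp (X + C 2) := by
    rw [charpoly_Bm_comp, Polynomial.comp_assoc]
    simp
  rw [hA, hq, Polynomial.mul_comp, Polynomial.pow_comp, Polynomial.X_comp]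
  have : (C (2:ℝ) : ℝ[X]) = 2 := map_ofNat C 2
  rw [this]
  exact Dvd.intro _ rfl

end EDSaux


/-- `-2` is an eigenvalue of the distance matrix of `T(a,b)` with multiplicity at
least `a+b-2`: `(X+2)^(a+b-2)` divides the characteristic polynomial. -/
theorem stmt_1 (a b : ℕ) (ha : 1 ≤ a) (hb : 1 ≤ b) :
    (X + 2) ^ (a + b - 2) ∣ (distMatrix a b).charpoly :=
  EDSaux.stmt_1' a b ha hb
end

section
/- If the extended double stars T(a,b) and T(a',b') (with a,b,a',b' positive integers) have equal distance characteristic polynomials, then the unordered pairs {a,b} and {a',b'} are equal; in particular T(a,b) ≅ T(a',b'). -/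
open Polynomial Matrix

namespace EDSaux

variable {a b : ℕ}

def typeOf : (Fin 3 ⊕ (Fin a ⊕ Fin b)) → Fin 5
  | Sum.inl c => c.castLE (by norm_num)
  | Sum.inr (Sum.inl _) => 3
  | Sum.inr (Sum.inr _) => 4

def tbl : Fin 5 → Fin 5 → ℕ :=
  fun t s => !![2,1,2,1,3; 1,2,1,2,2; 2,1,2,3,1; 1,2,3,2,4; 3,2,1,4,2] t s

def AdjT : Fin 5 → Fin 5 → Prop := fun t s =>
  (t = 0 ∧ s = 1) ∨ (t = 1 ∧ s = 0) ∨ (t = 1 ∧ s = 2) ∨ (t = 2 ∧ s = 1) ∨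
  (t = 3 ∧ s = 0) ∨ (t = 0 ∧ s = 3) ∨ (t = 4 ∧ s = 2) ∨ (t = 2 ∧ s = 4)

instance : ∀ t s, Decidable (AdjT t s) := fun t s => by unfold AdjT; infer_instance

lemma adjT {u v : Fin 3 ⊕ (Fin a ⊕ Fin b)} (h : (extendedDoubleStar a b).Adj u v) :
    AdjT (typeOf u) (typeOf v) := by
  rw [extendedDoubleStar, SimpleGraph.fromRel_adj] at h
  obtain ⟨hne, h | h⟩ := h <;>
  · rcases u with c | x | x <;> rcases v with m | y | y <;>
      simp only [EDSRel] at h <;>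
      first
      | exact h.elim
      | (obtain ⟨rfl, rfl⟩ | ⟨rfl, rfl⟩ := h <;> simp [typeOf, AdjT] <;> decide)
      | (subst h; simp [typeOf, AdjT] <;> decide)

lemma tbl_adj : ∀ t s, AdjT t s → tbl t s = 1 := by decide
lemma tbl_lip : ∀ t t' s, AdjT t t' → tbl t s ≤ tbl t' s + 1 := by decide
lemma tbl_diag : ∀ t, tbl t t = 2 := by decide
lemma tbl_symm : ∀ t s, tbl t s = tbl s t := by decide

def δ (u v : Fin 3 ⊕ (Fin a ⊕ Fin b)) : ℕ :=
  if u = v then 0 else tbl (typeOf u) (typeOf v)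

lemma delta_step {u x : Fin 3 ⊕ (Fin a ⊕ Fin b)} (h : (extendedDoubleStar a b).Adj u x)
    (v : Fin 3 ⊕ (Fin a ⊕ Fin b)) : δ u v ≤ δ x v + 1 := by
  unfold δ
  by_cases huv : u = v
  · simp [huv]
  · simp only [if_neg huv]
    by_cases hxv : x = v
    · subst hxv
      rw [if_pos rfl, tbl_adj _ _ (adjT h)]
    · rw [if_neg hxv]
      exact tbl_lip _ _ _ (adjT h)

lemma delta_le_length {u v : Fin 3 ⊕ (Fin a ⊕ Fin b)}
    (p : (extendedDoubleStar a b).Walk u v) : δ u v ≤ p.length := by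
  induction p with
  | nil => simp [δ]
  | @cons u w v h p ih =>
      calc δ u v ≤ δ w v + 1 := delta_step h v
        _ ≤ p.length + 1 := by omega
        _ = (SimpleGraph.Walk.cons h p).length := (SimpleGraph.Walk.length_cons _ _).symm

lemma dist_eq_delta_of_walk {u v : Fin 3 ⊕ (Fin a ⊕ Fin b)}
    (p : (extendedDoubleStar a b).Walk u v) (hp : p.length = δ u v) :
    (extendedDoubleStar a b).dist u v = δ u v := by
  refine le_antisymm (hp ▸ SimpleGraph.dist_le p) ?_
  obtain ⟨q, hq⟩ := SimpleGraph.Reachable.exists_walk_length_eq_dist (⟨p⟩ : (extendedDoubleStar a b).Reachable u v)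
  exact hq ▸ delta_le_length q

section walks

local notation "G" => extendedDoubleStar a b
abbrev V0 : Fin 3 ⊕ (Fin a ⊕ Fin b) := Sum.inl 0
abbrev V1 : Fin 3 ⊕ (Fin a ⊕ Fin b) := Sum.inl 1
abbrev V2 : Fin 3 ⊕ (Fin a ⊕ Fin b) := Sum.inl 2
abbrev VA (x : Fin a) : Fin 3 ⊕ (Fin a ⊕ Fin b) := Sum.inr (Sum.inl x)
abbrev VB (y : Fin b) : Fin 3 ⊕ (Fin a ⊕ Fin b) := Sum.inr (Sum.inr y)

lemma adj01_s2 : (G).Adj (V0 (a:=a) (b:=b)) V1 := by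
  rw [extendedDoubleStar, SimpleGraph.fromRel_adj]
  exact ⟨by simp, Or.inl (Or.inl ⟨rfl, rfl⟩)⟩

lemma adj21_s2 : (G).Adj (V2 (a:=a) (b:=b)) V1 := by
  rw [extendedDoubleStar, SimpleGraph.fromRel_adj]
  refine ⟨by simp [Fin.ext_iff], Or.inl (Or.inr ⟨rfl, rfl⟩)⟩

lemma adjA0 (x : Fin a) : (G).Adj (VA (b:=b) x) V0 := by
  rw [extendedDoubleStar, SimpleGraph.fromRel_adj]
  exact ⟨by simp, Or.inl rfl⟩

lemma adjB2 (y : Fin b) : (G).Adj (VB (a:=a) y) V2 := by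
  rw [extendedDoubleStar, SimpleGraph.fromRel_adj]
  exact ⟨by simp, Or.inl rfl⟩

open SimpleGraph.Walk in
lemma dist_delta (u v : Fin 3 ⊕ (Fin a ⊕ Fin b)) : (G).dist u v = δ u v := by
  by_cases huv : u = v
  · subst huv; simp [δ, SimpleGraph.dist_self]
  rcases u with c | x | x <;> rcases v with m | y | y
  · -- core-core
    fin_cases c <;> fin_cases m <;>
      first
      | exact absurd rfl huv
      | exact dist_eq_delta_of_walk (cons adj01_s2 nil) (by simp [δ, tbl, typeOf] <;> decide)
      | exact dist_eq_delta_of_walk (cons adj01_s2.symm nil) (by simp [δ, tbl, typeOf] <;> decide)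
      | exact dist_eq_delta_of_walk (cons adj21_s2 nil) (by simp [δ, tbl, typeOf, Fin.ext_iff] <;> decide)
      | exact dist_eq_delta_of_walk (cons adj21_s2.symm nil) (by simp [δ, tbl, typeOf, Fin.ext_iff] <;> decide)
      | exact dist_eq_delta_of_walk (cons adj01_s2 (cons adj21_s2.symm nil)) (by simp [δ, tbl, typeOf, Fin.ext_iff] <;> decide)
      | exact dist_eq_delta_of_walk (cons adj21_s2 (cons adj01_s2.symm nil)) (by simp [δ, tbl, typeOf, Fin.ext_iff] <;> decide)
  · -- core - A
    fin_cases c <;>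
      first
      | exact dist_eq_delta_of_walk (cons (adjA0 y).symm nil) (by simp [δ, tbl, typeOf] <;> decide)
      | exact dist_eq_delta_of_walk (cons adj01_s2.symm (cons (adjA0 y).symm nil)) (by simp [δ, tbl, typeOf] <;> decide)
      | exact dist_eq_delta_of_walk (cons adj21_s2 (cons adj01_s2.symm (cons (adjA0 y).symm nil))) (by simp [δ, tbl, typeOf, Fin.ext_iff] <;> decide)
  · -- core - B
    fin_cases c <;>
      first
      | exact dist_eq_delta_of_walk (cons (adjB2 y).symm nil) (by simp [δ, tbl, typeOf, Fin.ext_iff] <;> decide)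
      | exact dist_eq_delta_of_walk (cons adj21_s2.symm (cons (adjB2 y).symm nil)) (by simp [δ, tbl, typeOf, Fin.ext_iff] <;> decide)
      | exact dist_eq_delta_of_walk (cons adj01_s2 (cons adj21_s2.symm (cons (adjB2 y).symm nil))) (by simp [δ, tbl, typeOf, Fin.ext_iff] <;> decide)
  · -- A - core
    fin_cases m <;>
      first
      | exact dist_eq_delta_of_walk (cons (adjA0 x) nil) (by simp [δ, tbl, typeOf] <;> decide)
      | exact dist_eq_delta_of_walk (cons (adjA0 x) (cons adj01_s2 nil)) (by simp [δ, tbl, typeOf] <;> decide)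
      | exact dist_eq_delta_of_walk (cons (adjA0 x) (cons adj01_s2 (cons adj21_s2.symm nil))) (by simp [δ, tbl, typeOf, Fin.ext_iff] <;> decide)
  · -- A - A
    exact dist_eq_delta_of_walk (cons (adjA0 x) (cons (adjA0 y).symm nil))
      (by simp [δ, tbl, typeOf, huv] <;> decide)
  · -- A - B
    exact dist_eq_delta_of_walk
      (cons (adjA0 x) (cons adj01_s2 (cons adj21_s2.symm (cons (adjB2 y).symm nil))))
      (by simp [δ, tbl, typeOf] <;> decide)
  · -- B - core
    fin_cases m <;>
      first
      | exact dist_eq_delta_of_walk (cons (adjB2 x) nil) (by simp [δ, tbl, typeOf, Fin.ext_iff] <;> decide)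
      | exact dist_eq_delta_of_walk (cons (adjB2 x) (cons adj21_s2 nil)) (by simp [δ, tbl, typeOf] <;> decide)
      | exact dist_eq_delta_of_walk (cons (adjB2 x) (cons adj21_s2 (cons adj01_s2.symm nil))) (by simp [δ, tbl, typeOf] <;> decide)
  · -- B - A
    exact dist_eq_delta_of_walk
      (cons (adjB2 x) (cons adj21_s2 (cons adj01_s2.symm (cons (adjA0 y).symm nil))))
      (by simp [δ, tbl, typeOf] <;> decide)
  · -- B - B
    exact dist_eq_delta_of_walk (cons (adjB2 x) (cons (adjB2 y).symm nil))
      (by simp [δ, tbl, typeOf, huv] <;> decide)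

end walks
noncomputable def Umat (a b : ℕ) : Matrix (Fin 3 ⊕ (Fin a ⊕ Fin b)) (Fin 5) ℝ :=
  fun u t => if typeOf u = t then 1 else 0

noncomputable def Vmat (a b : ℕ) : Matrix (Fin 5) (Fin 3 ⊕ (Fin a ⊕ Fin b)) ℝ :=
  fun t v => tbl t (typeOf v)

lemma key (lam : ℝ) : distMatrix a b - lam • 1 = Umat a b * Vmat a b - (lam + 2) • 1 := by
  ext u v
  have hUV : (Umat a b * Vmat a b) u v = tbl (typeOf u) (typeOf v) := by
    simp [Umat, Vmat, Matrix.mul_apply, ite_mul]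
  have hD : distMatrix a b u v = (δ u v : ℝ) := by
    simp [distMatrix, dist_delta]
  simp only [Matrix.sub_apply, Matrix.smul_apply, Matrix.one_apply, hUV, hD, smul_eq_mul]
  by_cases huv : u = v
  · subst huv
    simp [δ, tbl_diag]
  · simp [δ, huv]

noncomputable def cnt (a b : ℕ) : Fin 5 → ℝ := ![1, 1, 1, (a : ℝ), (b : ℝ)]

lemma castLE0 (h : 3 ≤ 5) : Fin.castLE h (0 : Fin 3) = (0 : Fin 5) := rfl
lemma castLE1 (h : 3 ≤ 5) : Fin.castLE h (1 : Fin 3) = (1 : Fin 5) := rfl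
lemma castLE2 (h : 3 ≤ 5) : Fin.castLE h (2 : Fin 3) = (2 : Fin 5) := rfl

lemma VU_eq : Vmat a b * Umat a b = Matrix.of (fun t s => (tbl t s : ℝ) * cnt a b s) := by
  ext t s
  rw [Matrix.mul_apply]
  fin_cases s <;>
    simp (config := { decide := true }) [Umat, Vmat, typeOf, Fintype.sum_sum_type,
      Fin.sum_univ_three, cnt, mul_ite, castLE0, castLE1, castLE2] <;>
    ring

noncomputable def pval (a b : ℕ) (x : ℝ) : ℝ :=
  16 + 8*a + 8*b + (40 + 36*a + 36*b + 8*a*b)*x + (28 + 44*a + 44*b + 24*a*b)*x^2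
    + (2 + 18*a + 18*b + 12*a*b)*x^3 + (-4 + 2*a + 2*b)*x^4 - x^5

set_option maxHeartbeats 4000000 in
lemma det5 (lam : ℝ) :
    (Matrix.of (fun t s => (tbl t s : ℝ) * cnt a b s) - (lam + 2) • 1).det = pval a b lam := by
  have h5 : Matrix.of (fun t s => (tbl t s : ℝ) * cnt a b s)
      - (lam+2) • (1 : Matrix (Fin 5) (Fin 5) ℝ) =
      !![2 - (lam+2), 1, 2, (a:ℝ), 3*b;
         1, 2 - (lam+2), 1, 2*a, 2*b;
         2, 1, 2 - (lam+2), 3*a, b;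
         1, 2, 3, 2*a - (lam+2), 4*b;
         3, 2, 1, 4*a, 2*b - (lam+2)] := by
    ext t s
    fin_cases t <;> fin_cases s <;> simp [tbl, cnt, Matrix.vecHead, Matrix.vecTail] <;> norm_num
  rw [h5]
  simp [Matrix.det_succ_row_zero, Fin.sum_univ_succ, Matrix.det_fin_three]
  simp (config := { decide := true }) [Fin.succAbove, Fin.lt_def]
  unfold pval
  ring

lemma card_eq : Fintype.card (Fin 3 ⊕ (Fin a ⊕ Fin b)) = a + b + 3 := by
  simp [Fintype.card_sum]
  omega

set_option maxRecDepth 10000 in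
lemma det_formula (ha : 0 < a) (hb : 0 < b) (lam : ℝ) (hl : lam + 2 ≠ 0) :
    (distMatrix a b - lam • 1).det = (-(lam + 2))^(a + b - 2) * pval a b lam := by
  have hc : (-(lam + 2)) ≠ 0 := neg_ne_zero.mpr hl
  have e1 : distMatrix a b - lam • 1
      = (-(lam + 2)) • (1 + ((-(lam + 2))⁻¹ • Umat a b) * Vmat a b) := by
    rw [key lam, smul_add, Matrix.smul_mul, smul_smul, mul_inv_cancel₀ hc, one_smul,
      neg_smul, sub_eq_add_neg, add_comm]
  have e3 : Matrix.of (fun t s => (tbl t s : ℝ) * cnt a b s) - (lam + 2) • 1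
      = (-(lam + 2)) • (1 + Vmat a b * ((-(lam + 2))⁻¹ • Umat a b)) := by
    rw [Matrix.mul_smul, ← VU_eq, smul_add, smul_smul, mul_inv_cancel₀ hc, one_smul,
      neg_smul, sub_eq_add_neg, add_comm]
  have d1 := congrArg Matrix.det e1
  rw [Matrix.det_smul, Matrix.det_one_add_mul_comm, card_eq] at d1
  have d3 := congrArg Matrix.det e3
  rw [Matrix.det_smul, det5] at d3
  have hcard5 : Fintype.card (Fin 5) = 5 := by simp
  rw [hcard5] at d3
  have hsplit : a + b + 3 = (a + b - 2) + 5 := by omega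
  rw [d1, hsplit, pow_add, mul_assoc, ← d3]

noncomputable def gpoly (a b : ℕ) : ℝ[X] :=
  C (16 + 8*(a:ℝ) + 8*b) + C (40 + 36*(a:ℝ) + 36*b + 8*a*b) * X
    + C (28 + 44*(a:ℝ) + 44*b + 24*a*b) * X^2 + C (2 + 18*(a:ℝ) + 18*b + 12*a*b) * X^3
    + C (-4 + 2*(a:ℝ) + 2*b) * X^4 - X^5

lemma gpoly_eval (x : ℝ) : (gpoly a b).eval x = pval a b x := by
  simp [gpoly, pval]

noncomputable def qpoly (a b : ℕ) : ℝ[X] := (-(X + C 2))^(a + b - 2) * gpoly a b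

lemma gpoly_coeff5 : (gpoly a b).coeff 5 = -1 := by
  simp only [gpoly, Polynomial.coeff_add, Polynomial.coeff_sub, Polynomial.coeff_C_mul,
    Polynomial.coeff_X_pow, Polynomial.coeff_C, Polynomial.coeff_X]
  norm_num

lemma gpoly_coeff3 : (gpoly a b).coeff 3 = 2 + 18*(a:ℝ) + 18*b + 12*a*b := by
  simp only [gpoly, Polynomial.coeff_add, Polynomial.coeff_sub, Polynomial.coeff_C_mul,
    Polynomial.coeff_X_pow, Polynomial.coeff_C, Polynomial.coeff_X]
  norm_num

lemma gpoly_ne : gpoly a b ≠ 0 := by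
  intro hz
  have := gpoly_coeff5 (a := a) (b := b)
  rw [hz] at this
  simp at this

lemma gpoly_natDegree : (gpoly a b).natDegree = 5 := by
  unfold gpoly
  compute_degree!

lemma qpoly_natDegree : (qpoly a b).natDegree = (a + b - 2) + 5 := by
  have hXC : (-(X + C (2:ℝ))) ≠ 0 := by
    intro hz
    have := congrArg (fun p => Polynomial.coeff p 1) hz
    simp at this
  rw [qpoly, Polynomial.natDegree_mul (pow_ne_zero _ hXC) gpoly_ne,
    Polynomial.natDegree_pow, gpoly_natDegree, Polynomial.natDegree_neg,
    Polynomial.natDegree_X_add_C]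
  ring

lemma qpoly_eval (x : ℝ) : (qpoly a b).eval x = (-(x + 2))^(a + b - 2) * pval a b x := by
  simp [qpoly, gpoly_eval]

def swapIso (a b : ℕ) : extendedDoubleStar a b ≃g extendedDoubleStar b a where
  toEquiv := Equiv.sumCongr (Equiv.swap (0:Fin 3) 2) (Equiv.sumComm (Fin a) (Fin b))
  map_rel_iff' := by
    intro u v
    simp only [extendedDoubleStar, SimpleGraph.fromRel_adj, ne_eq]
    apply and_congr (not_congr (EmbeddingLike.apply_eq_iff_eq _))
    simp only [Equiv.sumCongr_apply]
    rcases u with c | x | x <;> rcases v with m | y | y <;>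
      simp only [Sum.map_inl, Sum.map_inr, Equiv.sumComm_apply, Sum.swap_inl, Sum.swap_inr,
        EDSRel] <;>
      first
        | (fin_cases c <;> fin_cases m <;> decide)
        | (fin_cases c <;> decide)
        | (fin_cases m <;> decide)
        | simp

end EDSaux

theorem stmt_2 (a b a' b' : ℕ) (ha : 0 < a) (hb : 0 < b) (ha' : 0 < a') (hb' : 0 < b')
    (h : ∀ lam : ℝ, (distMatrix a b - lam • 1).det = (distMatrix a' b' - lam • 1).det) :
    ((a = a' ∧ b = b') ∨ (a = b' ∧ b = a')) ∧
      Nonempty (extendedDoubleStar a b ≃g extendedDoubleStar a' b') := by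
  classical
  have hfun : ∀ x : ℝ, x ≠ -2 → (EDSaux.qpoly a b).eval x = (EDSaux.qpoly a' b').eval x := by
    intro x hx
    have hl : x + 2 ≠ 0 := fun hh => hx (by linarith)
    have h1 := EDSaux.det_formula ha hb x hl
    have h2 := EDSaux.det_formula ha' hb' x hl
    rw [EDSaux.qpoly_eval, EDSaux.qpoly_eval, ← h1, ← h2]
    exact h x
  have hq : EDSaux.qpoly a b = EDSaux.qpoly a' b' := by
    have hz : EDSaux.qpoly a b - EDSaux.qpoly a' b' = 0 := by
      apply Polynomial.eq_zero_of_infinite_isRoot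
      refine Set.Infinite.mono ?_ ((Set.finite_singleton (-2:ℝ)).infinite_compl)
      intro x hx
      have hx' : x ≠ -2 := hx
      simp only [Set.mem_setOf_eq, Polynomial.IsRoot, Polynomial.eval_sub]
      rw [hfun x hx']
      ring
    exact sub_eq_zero.mp hz
  have hsum : a + b = a' + b' := by
    have hd := congrArg Polynomial.natDegree hq
    rw [EDSaux.qpoly_natDegree, EDSaux.qpoly_natDegree] at hd
    omega
  have hprod : a * b = a' * b' := by
    have hXC : ((-(X + C (2:ℝ)))^(a' + b' - 2)) ≠ 0 := by
      apply pow_ne_zero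
      intro hz
      have := congrArg (fun p => Polynomial.coeff p 1) hz
      simp at this
    have hg : EDSaux.gpoly a b = EDSaux.gpoly a' b' := by
      have hq' := hq
      rw [EDSaux.qpoly, EDSaux.qpoly, hsum] at hq'
      exact mul_left_cancel₀ hXC hq'
    have hc3 := congrArg (fun p => Polynomial.coeff p 3) hg
    simp only [EDSaux.gpoly_coeff3] at hc3
    have hsr : (a:ℝ) + b = (a':ℝ) + b' := by exact_mod_cast hsum
    have hpr : (a:ℝ) * b = (a':ℝ) * b' := by nlinarith [hc3, hsr]
    exact_mod_cast hpr
  have hpairs : (a = a' ∧ b = b') ∨ (a = b' ∧ b = a') := by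
    have h1 : (a:ℤ) + b = a' + b' := by exact_mod_cast hsum
    have h2 : (a:ℤ) * b = a' * b' := by exact_mod_cast hprod
    have h3 : ((a:ℤ) - a') * ((a:ℤ) - b') = 0 := by
      have e : ((a:ℤ) - a') * ((a:ℤ) - b')
          = (a:ℤ)*(a:ℤ) - (a:ℤ)*((a':ℤ)+(b':ℤ)) + (a':ℤ)*(b':ℤ) := by ring
      rw [e, ← h1, ← h2]
      ring
    rcases mul_eq_zero.mp h3 with h4 | h4
    · left; constructor <;> omega
    · right; constructor <;> omega
  refine ⟨hpairs, ?_⟩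
  rcases hpairs with ⟨h1, h2⟩ | ⟨h1, h2⟩ <;> subst h1 <;> subst h2
  · exact ⟨RelIso.refl _⟩
  · exact ⟨EDSaux.swapIso a b⟩
end

section
/- The distance characteristic polynomial of T(c,c) factors as (−λ−2)^{2c−2}·g(λ)·(−f(λ)), where g(λ) = λ² + (2c+4)λ + 4 and f(λ) = −λ³ + 6cλ² + (12c+6)λ + 4c + 4; equivalently, p_{c,c}(λ) = g(λ)·(−λ³ + 6cλ² + (12c+6)λ + 4c+4) up to the stated sign conventions. -/
open Polynomial Matrix

namespace Stmt4Aux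

variable {c : ℕ}

abbrev V (c : ℕ) := Fin 3 ⊕ (Fin c ⊕ Fin c)

abbrev G (c : ℕ) : SimpleGraph (V c) := extendedDoubleStar c c

/-- potential function -/
def pf : V c → ℤ := Sum.elim (fun i => (i : ℤ) + 1) (Sum.elim (fun _ => 0) (fun _ => 4))

lemma adj_step {u v : V c} (h : (G c).Adj u v) : (pf u - pf v).natAbs ≤ 1 := by
  unfold G extendedDoubleStar at h; rw [SimpleGraph.fromRel_adj] at h
  obtain ⟨-, h | h⟩ := h <;>
  · rcases u with i | (i | i) <;> rcases v with j | (j | j) <;>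
      simp only [EDSRel] at h <;>
      first
      | exact absurd h not_false
      | ((try obtain h | h := h) <;> (try obtain ⟨h1, h2⟩ := h) <;> subst_vars <;> first | decide | simp [pf])

lemma walk_lb {u v : V c} (p : (G c).Walk u v) : (pf u - pf v).natAbs ≤ p.length := by
  induction p with
  | nil => simp
  | @cons a b w h q ih =>
    have tri : (pf a - pf w).natAbs ≤ (pf a - pf b).natAbs + (pf b - pf w).natAbs := by
      have : pf a - pf w = (pf a - pf b) + (pf b - pf w) := by ring
      rw [this]; exact Int.natAbs_add_le _ _
    have := adj_step h
    simp only [SimpleGraph.Walk.length_cons]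
    omega

lemma dist_eq_of {u v : V c} {n : ℕ} (p : (G c).Walk u v) (hp : p.length = n)
    (hn : (pf u - pf v).natAbs = n) : (G c).dist u v = n := by
  refine le_antisymm (hp ▸ SimpleGraph.dist_le p) ?_
  obtain ⟨q, hq⟩ := p.reachable.exists_walk_length_eq_dist
  rw [← hq, ← hn]; exact walk_lb q

-- adjacencies
lemma a01 : (G c).Adj (Sum.inl 0) (Sum.inl 1) := by
  unfold G extendedDoubleStar; rw [SimpleGraph.fromRel_adj]
  exact ⟨by simp, Or.inl (Or.inl ⟨rfl, rfl⟩)⟩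

lemma a21 : (G c).Adj (Sum.inl 2) (Sum.inl 1) := by
  unfold G extendedDoubleStar; rw [SimpleGraph.fromRel_adj]
  exact ⟨by simp, Or.inl (Or.inr ⟨rfl, rfl⟩)⟩

lemma aL (i : Fin c) : (G c).Adj (Sum.inr (Sum.inl i)) (Sum.inl 0) := by
  unfold G extendedDoubleStar; rw [SimpleGraph.fromRel_adj]
  exact ⟨by simp, Or.inl rfl⟩

lemma aR (i : Fin c) : (G c).Adj (Sum.inr (Sum.inr i)) (Sum.inl 2) := by
  unfold G extendedDoubleStar; rw [SimpleGraph.fromRel_adj]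
  exact ⟨by simp, Or.inl rfl⟩

end Stmt4Aux

namespace Stmt4Aux

def ty {c : ℕ} : V c → Fin 5 :=
  Sum.elim (fun i => i.castLE (by omega)) (Sum.elim (fun _ => 3) (fun _ => 4))

def cN : Fin 5 → Fin 5 → ℕ := fun i j =>
  !![0,1,2,1,3; 1,0,1,2,2; 2,1,0,3,1; 1,2,3,2,4; 3,2,1,4,2] i j

lemma not_adj_LL {c : ℕ} (i j : Fin c) :
    ¬ (G c).Adj (Sum.inr (Sum.inl i)) (Sum.inr (Sum.inl j)) := by
  intro had
  unfold G extendedDoubleStar at had; rw [SimpleGraph.fromRel_adj] at had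
  simp [EDSRel] at had

lemma not_adj_RR {c : ℕ} (i j : Fin c) :
    ¬ (G c).Adj (Sum.inr (Sum.inr i)) (Sum.inr (Sum.inr j)) := by
  intro had
  unfold G extendedDoubleStar at had; rw [SimpleGraph.fromRel_adj] at had
  simp [EDSRel] at had

lemma dist_eq {c : ℕ} (u v : V c) :
    (G c).dist u v = if u = v then 0 else cN (ty u) (ty v) := by
  by_cases huv : u = v
  · simp [huv]
  · rw [if_neg huv]
    rcases u with i | (i | i) <;> rcases v with j | (j | j)
    · -- inl inl
      fin_cases i <;> fin_cases j
      · exact absurd rfl huv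
      · exact dist_eq_of (.cons a01 .nil) (by rfl) (by rfl)
      · exact dist_eq_of (.cons a01 (.cons a21.symm .nil)) (by rfl) (by rfl)
      · exact dist_eq_of (.cons a01.symm .nil) (by rfl) (by rfl)
      · exact absurd rfl huv
      · exact dist_eq_of (.cons a21.symm .nil) (by rfl) (by rfl)
      · exact dist_eq_of (.cons a21 (.cons a01.symm .nil)) (by rfl) (by rfl)
      · exact dist_eq_of (.cons a21 .nil) (by rfl) (by rfl)
      · exact absurd rfl huv
    · -- inl leafL
      fin_cases i
      · exact dist_eq_of (.cons (aL j).symm .nil) (by rfl) (by rfl)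
      · exact dist_eq_of (.cons a01.symm (.cons (aL j).symm .nil)) (by rfl) (by rfl)
      · exact dist_eq_of (.cons a21 (.cons a01.symm (.cons (aL j).symm .nil)))
          (by rfl) (by rfl)
    · -- inl leafR
      fin_cases i
      · exact dist_eq_of (.cons a01 (.cons a21.symm (.cons (aR j).symm .nil)))
          (by rfl) (by rfl)
      · exact dist_eq_of (.cons a21.symm (.cons (aR j).symm .nil)) (by rfl) (by rfl)
      · exact dist_eq_of (.cons (aR j).symm .nil) (by rfl) (by rfl)
    · -- leafL inl
      rw [SimpleGraph.dist_comm]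
      fin_cases j
      · exact dist_eq_of (.cons (aL i).symm .nil) (by rfl) (by rfl)
      · exact dist_eq_of (.cons a01.symm (.cons (aL i).symm .nil)) (by rfl) (by rfl)
      · exact dist_eq_of (.cons a21 (.cons a01.symm (.cons (aL i).symm .nil)))
          (by rfl) (by rfl)
    · -- leafL leafL
      have hle : (G c).dist (Sum.inr (Sum.inl i)) (Sum.inr (Sum.inl j)) ≤ 2 := by
        simpa using SimpleGraph.dist_le
          (SimpleGraph.Walk.cons (aL i) (SimpleGraph.Walk.cons (aL j).symm SimpleGraph.Walk.nil))
      have h0 : (G c).dist (Sum.inr (Sum.inl i)) (Sum.inr (Sum.inl j)) ≠ 0 := by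
        rw [SimpleGraph.dist_ne_zero_iff_ne_and_reachable]
        exact ⟨huv, (SimpleGraph.Walk.cons (aL i) (SimpleGraph.Walk.cons (aL j).symm SimpleGraph.Walk.nil)).reachable⟩
      have h1 : (G c).dist (Sum.inr (Sum.inl i)) (Sum.inr (Sum.inl j)) ≠ 1 := by
        exact fun h => not_adj_LL i j (SimpleGraph.dist_eq_one_iff_adj.mp h)
      have hc2 : cN (ty (Sum.inr (Sum.inl i) : V c)) (ty (Sum.inr (Sum.inl j) : V c)) = 2 := by
        rfl
      omega
    · -- leafL leafR
      exact dist_eq_of (.cons (aL i) (.cons a01 (.cons a21.symm (.cons (aR j).symm .nil))))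
        (by rfl) (by rfl)
    · -- leafR inl
      rw [SimpleGraph.dist_comm]
      fin_cases j
      · exact dist_eq_of (.cons a01 (.cons a21.symm (.cons (aR i).symm .nil)))
          (by rfl) (by rfl)
      · exact dist_eq_of (.cons a21.symm (.cons (aR i).symm .nil)) (by rfl) (by rfl)
      · exact dist_eq_of (.cons (aR i).symm .nil) (by rfl) (by rfl)
    · -- leafR leafL
      rw [SimpleGraph.dist_comm]
      exact dist_eq_of (.cons (aL j) (.cons a01 (.cons a21.symm (.cons (aR i).symm .nil))))
        (by rfl) (by rfl)
    · -- leafR leafR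
      have hle : (G c).dist (Sum.inr (Sum.inr i)) (Sum.inr (Sum.inr j)) ≤ 2 := by
        simpa using SimpleGraph.dist_le
          (SimpleGraph.Walk.cons (aR i) (SimpleGraph.Walk.cons (aR j).symm SimpleGraph.Walk.nil))
      have h0 : (G c).dist (Sum.inr (Sum.inr i)) (Sum.inr (Sum.inr j)) ≠ 0 := by
        rw [SimpleGraph.dist_ne_zero_iff_ne_and_reachable]
        exact ⟨huv, (SimpleGraph.Walk.cons (aR i) (SimpleGraph.Walk.cons (aR j).symm SimpleGraph.Walk.nil)).reachable⟩
      have h1 : (G c).dist (Sum.inr (Sum.inr i)) (Sum.inr (Sum.inr j)) ≠ 1 := by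
        exact fun h => not_adj_RR i j (SimpleGraph.dist_eq_one_iff_adj.mp h)
      have hc2 : cN (ty (Sum.inr (Sum.inr i) : V c)) (ty (Sum.inr (Sum.inr j) : V c)) = 2 := by
        rfl
      omega

end Stmt4Aux

namespace Stmt4Aux

def Cm : Matrix (Fin 5) (Fin 5) ℝ :=
  !![0,1,2,1,3; 1,0,1,2,2; 2,1,0,3,1; 1,2,3,2,4; 3,2,1,4,2]

def Xm (c : ℕ) : Matrix (V c) (Fin 5) ℝ := fun u k => if ty u = k then 1 else 0

def dv (c : ℕ) (lam : ℝ) : V c → ℝ := Sum.elim (fun _ => -lam) (fun _ => -lam - 2)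

lemma cast_cN (a b : Fin 5) : ((cN a b : ℕ) : ℝ) = Cm a b := by
  fin_cases a <;> fin_cases b <;> norm_num [cN, Cm]

lemma XCX_apply (c : ℕ) (u v : V c) :
    (Xm c * Cm * (Xm c)ᵀ) u v = Cm (ty u) (ty v) := by
  have h1 : ∀ l, (Xm c * Cm) u l = Cm (ty u) l := by
    intro l
    simp [Matrix.mul_apply, Xm, ite_mul]
  simp [Matrix.mul_apply, h1, Matrix.transpose_apply, Xm, mul_ite]

lemma decomp (c : ℕ) (lam : ℝ) :
    distMatrix c c - lam • 1 = Xm c * Cm * (Xm c)ᵀ + Matrix.diagonal (dv c lam) := by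
  ext u v
  have hd : distMatrix c c u v = ((if u = v then 0 else cN (ty u) (ty v) : ℕ) : ℝ) := by
    rw [distMatrix, dist_eq]
  by_cases huv : u = v
  · subst huv
    simp only [Matrix.sub_apply, Matrix.add_apply, Matrix.smul_apply, Matrix.one_apply_eq,
      Matrix.diagonal_apply_eq, hd, if_pos rfl, XCX_apply]
    rcases u with i | (i | i)
    · have : Cm (ty (Sum.inl i : V c)) (ty (Sum.inl i : V c)) = 0 := by
        fin_cases i <;> rfl
      rw [this]; simp [dv]
    · have : Cm (ty (Sum.inr (Sum.inl i) : V c)) (ty (Sum.inr (Sum.inl i) : V c)) = 2 := by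
        rfl
      rw [this]; simp [dv]
    · have : Cm (ty (Sum.inr (Sum.inr i) : V c)) (ty (Sum.inr (Sum.inr i) : V c)) = 2 := by
        rfl
      rw [this]; simp [dv]
  · simp only [Matrix.sub_apply, Matrix.add_apply, Matrix.smul_apply,
      Matrix.one_apply_ne huv, Matrix.diagonal_apply_ne _ huv, hd, if_neg huv, XCX_apply,
      cast_cN]
    simp

end Stmt4Aux

namespace Stmt4Aux

lemma det_diag (c : ℕ) (lam : ℝ) :
    (Matrix.diagonal (dv c lam)).det = (-lam) ^ 3 * (-lam - 2) ^ (2 * c) := by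
  rw [Matrix.det_diagonal, Fintype.prod_sum_type]
  simp [dv, Finset.prod_const, two_mul, pow_add]

noncomputable def dinv (c : ℕ) (lam : ℝ) : V c → ℝ := fun u => (dv c lam u)⁻¹

noncomputable def s5 (c : ℕ) (lam : ℝ) : Fin 5 → ℝ :=
  ![(-lam)⁻¹, (-lam)⁻¹, (-lam)⁻¹, (c : ℝ) * (-lam - 2)⁻¹, (c : ℝ) * (-lam - 2)⁻¹]

lemma S_eq (c : ℕ) (lam : ℝ) :
    (Xm c)ᵀ * (Matrix.diagonal (dinv c lam) * Xm c) = Matrix.diagonal (s5 c lam) := by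
  ext k l
  rw [Matrix.mul_apply]
  simp only [Matrix.transpose_apply, Matrix.diagonal_mul]
  rw [Fintype.sum_sum_type, Fin.sum_univ_three, Fintype.sum_sum_type]
  simp only [dinv, dv, ty, Xm, Sum.elim_inl, Sum.elim_inr, Finset.sum_const,
    Finset.card_univ, Fintype.card_fin]
  fin_cases k <;> fin_cases l <;>
    simp +decide [Matrix.diagonal, s5, Fin.ext_iff, Fin.castLE, nsmul_eq_mul]

private lemma e1 : (Fin.succ (2 : Fin 4)) = 3 := rfl
private lemma e2 : (Fin.succ (2 : Fin 3)) = 3 := rfl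
private lemma e3 : (Fin.succ (3 : Fin 4)) = 4 := rfl
private lemma e2b : (Fin.succ (1 : Fin 2)) = 2 := rfl
private lemma e0 : (Fin.succ (0 : Fin 1)) = 1 := rfl
private lemma sa1 : Fin.succAbove (0 : Fin 2) (0 : Fin 1) = 1 := rfl
private lemma sa2 : Fin.succAbove (1 : Fin 2) (0 : Fin 1) = 0 := rfl
private lemma sa3 : Fin.succAbove (0 : Fin 3) (0 : Fin 2) = 1 := rfl
private lemma sa4 : Fin.succAbove (0 : Fin 3) (1 : Fin 2) = 2 := rfl
private lemma sa5 : Fin.succAbove (1 : Fin 3) (0 : Fin 2) = 0 := rfl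
private lemma sa6 : Fin.succAbove (1 : Fin 3) (1 : Fin 2) = 2 := rfl
private lemma sa7 : Fin.succAbove (2 : Fin 3) (0 : Fin 2) = 0 := rfl
private lemma sa8 : Fin.succAbove (2 : Fin 3) (1 : Fin 2) = 1 := rfl
private lemma sa9 : Fin.succAbove (0 : Fin 4) (0 : Fin 3) = 1 := rfl
private lemma sa10 : Fin.succAbove (0 : Fin 4) (1 : Fin 3) = 2 := rfl
private lemma sa11 : Fin.succAbove (0 : Fin 4) (2 : Fin 3) = 3 := rfl
private lemma sa12 : Fin.succAbove (1 : Fin 4) (0 : Fin 3) = 0 := rfl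
private lemma sa13 : Fin.succAbove (1 : Fin 4) (1 : Fin 3) = 2 := rfl
private lemma sa14 : Fin.succAbove (1 : Fin 4) (2 : Fin 3) = 3 := rfl
private lemma sa15 : Fin.succAbove (2 : Fin 4) (0 : Fin 3) = 0 := rfl
private lemma sa16 : Fin.succAbove (2 : Fin 4) (1 : Fin 3) = 1 := rfl
private lemma sa17 : Fin.succAbove (2 : Fin 4) (2 : Fin 3) = 3 := rfl
private lemma sa18 : Fin.succAbove (3 : Fin 4) (0 : Fin 3) = 0 := rfl
private lemma sa19 : Fin.succAbove (3 : Fin 4) (1 : Fin 3) = 1 := rfl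
private lemma sa20 : Fin.succAbove (3 : Fin 4) (2 : Fin 3) = 2 := rfl
private lemma sa21 : Fin.succAbove (0 : Fin 5) (0 : Fin 4) = 1 := rfl
private lemma sa22 : Fin.succAbove (0 : Fin 5) (1 : Fin 4) = 2 := rfl
private lemma sa23 : Fin.succAbove (0 : Fin 5) (2 : Fin 4) = 3 := rfl
private lemma sa24 : Fin.succAbove (0 : Fin 5) (3 : Fin 4) = 4 := rfl
private lemma sa25 : Fin.succAbove (1 : Fin 5) (0 : Fin 4) = 0 := rfl
private lemma sa26 : Fin.succAbove (1 : Fin 5) (1 : Fin 4) = 2 := rfl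
private lemma sa27 : Fin.succAbove (1 : Fin 5) (2 : Fin 4) = 3 := rfl
private lemma sa28 : Fin.succAbove (1 : Fin 5) (3 : Fin 4) = 4 := rfl
private lemma sa29 : Fin.succAbove (2 : Fin 5) (0 : Fin 4) = 0 := rfl
private lemma sa30 : Fin.succAbove (2 : Fin 5) (1 : Fin 4) = 1 := rfl
private lemma sa31 : Fin.succAbove (2 : Fin 5) (2 : Fin 4) = 3 := rfl
private lemma sa32 : Fin.succAbove (2 : Fin 5) (3 : Fin 4) = 4 := rfl
private lemma sa33 : Fin.succAbove (3 : Fin 5) (0 : Fin 4) = 0 := rfl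
private lemma sa34 : Fin.succAbove (3 : Fin 5) (1 : Fin 4) = 1 := rfl
private lemma sa35 : Fin.succAbove (3 : Fin 5) (2 : Fin 4) = 2 := rfl
private lemma sa36 : Fin.succAbove (3 : Fin 5) (3 : Fin 4) = 4 := rfl
private lemma sa37 : Fin.succAbove (4 : Fin 5) (0 : Fin 4) = 0 := rfl
private lemma sa38 : Fin.succAbove (4 : Fin 5) (1 : Fin 4) = 1 := rfl
private lemma sa39 : Fin.succAbove (4 : Fin 5) (2 : Fin 4) = 2 := rfl
private lemma sa40 : Fin.succAbove (4 : Fin 5) (3 : Fin 4) = 3 := rfl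

set_option maxHeartbeats 2000000 in
private lemma det_fin_five (A : Matrix (Fin 5) (Fin 5) ℝ) : A.det = A 0 0 * A 1 1 * A 2 2 * A 3 3 * A 4 4 - A 0 0 * A 1 1 * A 2 2 * A 3 4 * A 4 3 - A 0 0 * A 1 1 * A 2 3 * A 3 2 * A 4 4 + A 0 0 * A 1 1 * A 2 3 * A 3 4 * A 4 2 + A 0 0 * A 1 1 * A 2 4 * A 3 2 * A 4 3 - A 0 0 * A 1 1 * A 2 4 * A 3 3 * A 4 2 - A 0 0 * A 1 2 * A 2 1 * A 3 3 * A 4 4 + A 0 0 * A 1 2 * A 2 1 * A 3 4 * A 4 3 + A 0 0 * A 1 2 * A 2 3 * A 3 1 * A 4 4 - A 0 0 * A 1 2 * A 2 3 * A 3 4 * A 4 1 - A 0 0 * A 1 2 * A 2 4 * A 3 1 * A 4 3 + A 0 0 * A 1 2 * A 2 4 * A 3 3 * A 4 1 + A 0 0 * A 1 3 * A 2 1 * A 3 2 * A 4 4 - A 0 0 * A 1 3 * A 2 1 * A 3 4 * A 4 2 - A 0 0 * A 1 3 * A 2 2 * A 3 1 * A 4 4 + A 0 0 * A 1 3 * A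 2 2 * A 3 4 * A 4 1 + A 0 0 * A 1 3 * A 2 4 * A 3 1 * A 4 2 - A 0 0 * A 1 3 * A 2 4 * A 3 2 * A 4 1 - A 0 0 * A 1 4 * A 2 1 * A 3 2 * A 4 3 + A 0 0 * A 1 4 * A 2 1 * A 3 3 * A 4 2 + A 0 0 * A 1 4 * A 2 2 * A 3 1 * A 4 3 - A 0 0 * A 1 4 * A 2 2 * A 3 3 * A 4 1 - A 0 0 * A 1 4 * A 2 3 * A 3 1 * A 4 2 + A 0 0 * A 1 4 * A 2 3 * A 3 2 * A 4 1 - A 0 1 * A 1 0 * A 2 2 * A 3 3 * A 4 4 + A 0 1 * A 1 0 * A 2 2 * A 3 4 * A 4 3 + A 0 1 * A 1 0 * A 2 3 * A 3 2 * A 4 4 - A 0 1 * A 1 0 * A 2 3 * A 3 4 * A 4 2 - A 0 1 * A 1 0 * A 2 4 * A 3 2 * A 4 3 + A 0 1 * A 1 0 * A 2 4 * A 3 3 * A 4 2 + A 0 1 * A 1 2 * A 2 0 * A 3 3 * A 4 4 - A 0 1 * A 1 2 * A 2 0 * A 3 4 * A 4 3 - A 0 1 * A 1 2 * A 2 3 *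 A 3 0 * A 4 4 + A 0 1 * A 1 2 * A 2 3 * A 3 4 * A 4 0 + A 0 1 * A 1 2 * A 2 4 * A 3 0 * A 4 3 - A 0 1 * A 1 2 * A 2 4 * A 3 3 * A 4 0 - A 0 1 * A 1 3 * A 2 0 * A 3 2 * A 4 4 + A 0 1 * A 1 3 * A 2 0 * A 3 4 * A 4 2 + A 0 1 * A 1 3 * A 2 2 * A 3 0 * A 4 4 - A 0 1 * A 1 3 * A 2 2 * A 3 4 * A 4 0 - A 0 1 * A 1 3 * A 2 4 * A 3 0 * A 4 2 + A 0 1 * A 1 3 * A 2 4 * A 3 2 * A 4 0 + A 0 1 * A 1 4 * A 2 0 * A 3 2 * A 4 3 - A 0 1 * A 1 4 * A 2 0 * A 3 3 * A 4 2 - A 0 1 * A 1 4 * A 2 2 * A 3 0 * A 4 3 + A 0 1 * A 1 4 * A 2 2 * A 3 3 * A 4 0 + A 0 1 * A 1 4 * A 2 3 * A 3 0 * A 4 2 - A 0 1 * A 1 4 * A 2 3 * A 3 2 * A 4 0 + A 0 2 * A 1 0 * A 2 1 * A 3 3 * A 4 4 - A 0 2 * A 1 0 * A 2 1 * A 3 4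 * A 4 3 - A 0 2 * A 1 0 * A 2 3 * A 3 1 * A 4 4 + A 0 2 * A 1 0 * A 2 3 * A 3 4 * A 4 1 + A 0 2 * A 1 0 * A 2 4 * A 3 1 * A 4 3 - A 0 2 * A 1 0 * A 2 4 * A 3 3 * A 4 1 - A 0 2 * A 1 1 * A 2 0 * A 3 3 * A 4 4 + A 0 2 * A 1 1 * A 2 0 * A 3 4 * A 4 3 + A 0 2 * A 1 1 * A 2 3 * A 3 0 * A 4 4 - A 0 2 * A 1 1 * A 2 3 * A 3 4 * A 4 0 - A 0 2 * A 1 1 * A 2 4 * A 3 0 * A 4 3 + A 0 2 * A 1 1 * A 2 4 * A 3 3 * A 4 0 + A 0 2 * A 1 3 * A 2 0 * A 3 1 * A 4 4 - A 0 2 * A 1 3 * A 2 0 * A 3 4 * A 4 1 - A 0 2 * A 1 3 * A 2 1 * A 3 0 * A 4 4 + A 0 2 * A 1 3 * A 2 1 * A 3 4 * A 4 0 + A 0 2 * A 1 3 * A 2 4 * A 3 0 * A 4 1 - A 0 2 * A 1 3 * A 2 4 * A 3 1 * A 4 0 - A 0 2 * A 1 4 * A 2 0 * A 3 1 * A 4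 3 + A 0 2 * A 1 4 * A 2 0 * A 3 3 * A 4 1 + A 0 2 * A 1 4 * A 2 1 * A 3 0 * A 4 3 - A 0 2 * A 1 4 * A 2 1 * A 3 3 * A 4 0 - A 0 2 * A 1 4 * A 2 3 * A 3 0 * A 4 1 + A 0 2 * A 1 4 * A 2 3 * A 3 1 * A 4 0 - A 0 3 * A 1 0 * A 2 1 * A 3 2 * A 4 4 + A 0 3 * A 1 0 * A 2 1 * A 3 4 * A 4 2 + A 0 3 * A 1 0 * A 2 2 * A 3 1 * A 4 4 - A 0 3 * A 1 0 * A 2 2 * A 3 4 * A 4 1 - A 0 3 * A 1 0 * A 2 4 * A 3 1 * A 4 2 + A 0 3 * A 1 0 * A 2 4 * A 3 2 * A 4 1 + A 0 3 * A 1 1 * A 2 0 * A 3 2 * A 4 4 - A 0 3 * A 1 1 * A 2 0 * A 3 4 * A 4 2 - A 0 3 * A 1 1 * A 2 2 * A 3 0 * A 4 4 + A 0 3 * A 1 1 * A 2 2 * A 3 4 * A 4 0 + A 0 3 * A 1 1 * A 2 4 * A 3 0 * A 4 2 - A 0 3 * A 1 1 * A 2 4 * A 3 2 * A 4 0 - A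 0 3 * A 1 2 * A 2 0 * A 3 1 * A 4 4 + A 0 3 * A 1 2 * A 2 0 * A 3 4 * A 4 1 + A 0 3 * A 1 2 * A 2 1 * A 3 0 * A 4 4 - A 0 3 * A 1 2 * A 2 1 * A 3 4 * A 4 0 - A 0 3 * A 1 2 * A 2 4 * A 3 0 * A 4 1 + A 0 3 * A 1 2 * A 2 4 * A 3 1 * A 4 0 + A 0 3 * A 1 4 * A 2 0 * A 3 1 * A 4 2 - A 0 3 * A 1 4 * A 2 0 * A 3 2 * A 4 1 - A 0 3 * A 1 4 * A 2 1 * A 3 0 * A 4 2 + A 0 3 * A 1 4 * A 2 1 * A 3 2 * A 4 0 + A 0 3 * A 1 4 * A 2 2 * A 3 0 * A 4 1 - A 0 3 * A 1 4 * A 2 2 * A 3 1 * A 4 0 + A 0 4 * A 1 0 * A 2 1 * A 3 2 * A 4 3 - A 0 4 * A 1 0 * A 2 1 * A 3 3 * A 4 2 - A 0 4 * A 1 0 * A 2 2 * A 3 1 * A 4 3 + A 0 4 * A 1 0 * A 2 2 * A 3 3 * A 4 1 + A 0 4 * A 1 0 * A 2 3 * A 3 1 * A 4 2 - A 0 4 *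 A 1 0 * A 2 3 * A 3 2 * A 4 1 - A 0 4 * A 1 1 * A 2 0 * A 3 2 * A 4 3 + A 0 4 * A 1 1 * A 2 0 * A 3 3 * A 4 2 + A 0 4 * A 1 1 * A 2 2 * A 3 0 * A 4 3 - A 0 4 * A 1 1 * A 2 2 * A 3 3 * A 4 0 - A 0 4 * A 1 1 * A 2 3 * A 3 0 * A 4 2 + A 0 4 * A 1 1 * A 2 3 * A 3 2 * A 4 0 + A 0 4 * A 1 2 * A 2 0 * A 3 1 * A 4 3 - A 0 4 * A 1 2 * A 2 0 * A 3 3 * A 4 1 - A 0 4 * A 1 2 * A 2 1 * A 3 0 * A 4 3 + A 0 4 * A 1 2 * A 2 1 * A 3 3 * A 4 0 + A 0 4 * A 1 2 * A 2 3 * A 3 0 * A 4 1 - A 0 4 * A 1 2 * A 2 3 * A 3 1 * A 4 0 - A 0 4 * A 1 3 * A 2 0 * A 3 1 * A 4 2 + A 0 4 * A 1 3 * A 2 0 * A 3 2 * A 4 1 + A 0 4 * A 1 3 * A 2 1 * A 3 0 * A 4 2 - A 0 4 * A 1 3 * A 2 1 * A 3 2 * A 4 0 - A 0 4 * A 1 3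 * A 2 2 * A 3 0 * A 4 1 + A 0 4 * A 1 3 * A 2 2 * A 3 1 * A 4 0 := by
  simp only [Matrix.det_succ_row_zero, Fin.sum_univ_succ, Matrix.submatrix_apply,
    Matrix.submatrix_submatrix, Function.comp_apply, Matrix.det_unique, Finset.univ_unique,
    Fin.default_eq_zero, Fin.sum_univ_zero, Fin.val_zero, Fin.val_succ, Finset.sum_singleton,
    Fin.zero_succAbove, Fin.succ_succAbove_zero, Fin.succ_succAbove_one, Fin.succ_succAbove_succ,
    Fin.succ_zero_eq_one, Fin.succ_one_eq_two, e1, e2, e3, e2b, e0,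
    sa1, sa2, sa3, sa4, sa5, sa6, sa7, sa8, sa9, sa10, sa11, sa12, sa13, sa14, sa15, sa16, sa17, sa18, sa19, sa20, sa21, sa22, sa23, sa24, sa25, sa26, sa27, sa28, sa29, sa30, sa31, sa32, sa33, sa34, sa35, sa36, sa37, sa38, sa39, sa40]
  ring

set_option maxHeartbeats 2000000 in
lemma det5 (s t : ℝ) :
    Matrix.det !![1, s, 2*s, t, 3*t;
       s, 1, s, 2*t, 2*t;
       2*s, s, 1, 3*t, t;
       s, 2*s, 3*s, 1+2*t, 4*t;
       3*s, 2*s, s, 4*t, 1+2*t] =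
      1 + 4*t - 12*t^2 - 28*s*t + 24*s*t^2 - 6*s^2 + 32*s^2*t - 8*s^2*t^2
        + 4*s^3 - 8*s^3*t := by
  rw [det_fin_five]
  simp only [Matrix.of_apply, Matrix.cons_val, Matrix.cons_val_zero, Matrix.cons_val_one, Matrix.cons_val_two, Matrix.cons_val_three, Matrix.cons_val_four, Matrix.cons_val_succ, Matrix.head_cons, Matrix.tail_cons]
  ring

set_option maxHeartbeats 1600000 in
lemma det_good (c : ℕ) (hc : 1 ≤ c) (lam : ℝ) (h0 : lam ≠ 0) (h2 : lam + 2 ≠ 0) :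
    (distMatrix c c - lam • 1).det =
      (-lam - 2) ^ (2 * c - 2) * ((lam ^ 2 + (2 * c + 4) * lam + 4) *
        (-lam ^ 3 + 6 * c * lam ^ 2 + (12 * c + 6) * lam + 4 * c + 4)) := by
  have hn0 : (-lam) ≠ 0 := neg_ne_zero.mpr h0
  have hn2 : (-lam - 2) ≠ 0 := by intro h; apply h2; linarith
  have hdv : ∀ u : V c, dv c lam u ≠ 0 := by
    rintro (u | u)
    · simpa [dv] using hn0
    · simpa [dv] using hn2
  have hunit : Matrix.diagonal (dv c lam) * Matrix.diagonal (dinv c lam) = 1 := by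
    rw [Matrix.diagonal_mul_diagonal,
      show (fun u => dv c lam u * dinv c lam u) = fun _ => 1 from
        funext fun u => mul_inv_cancel₀ (hdv u), Matrix.diagonal_one]
  rw [decomp]
  have key : Xm c * Cm * (Xm c)ᵀ + Matrix.diagonal (dv c lam)
      = Matrix.diagonal (dv c lam) *
        (1 + (Matrix.diagonal (dinv c lam) * Xm c) * (Cm * (Xm c)ᵀ)) := by
    rw [Matrix.mul_add, Matrix.mul_one]
    simp only [← Matrix.mul_assoc]
    rw [hunit, Matrix.one_mul, add_comm, Matrix.mul_assoc]
  rw [key, Matrix.det_mul, Matrix.det_one_add_mul_comm, det_diag]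
  have hS : Cm * (Xm c)ᵀ * (Matrix.diagonal (dinv c lam) * Xm c)
      = Cm * Matrix.diagonal (s5 c lam) := by
    rw [Matrix.mul_assoc, S_eq]
  rw [hS]
  have hM5 : (1 + Cm * Matrix.diagonal (s5 c lam)) =
      !![1, (-lam)⁻¹, 2*(-lam)⁻¹, (c:ℝ)*(-lam-2)⁻¹, 3*((c:ℝ)*(-lam-2)⁻¹);
         (-lam)⁻¹, 1, (-lam)⁻¹, 2*((c:ℝ)*(-lam-2)⁻¹), 2*((c:ℝ)*(-lam-2)⁻¹);
         2*(-lam)⁻¹, (-lam)⁻¹, 1, 3*((c:ℝ)*(-lam-2)⁻¹), (c:ℝ)*(-lam-2)⁻¹;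
         (-lam)⁻¹, 2*(-lam)⁻¹, 3*(-lam)⁻¹, 1+2*((c:ℝ)*(-lam-2)⁻¹), 4*((c:ℝ)*(-lam-2)⁻¹);
         3*(-lam)⁻¹, 2*(-lam)⁻¹, (-lam)⁻¹, 4*((c:ℝ)*(-lam-2)⁻¹), 1+2*((c:ℝ)*(-lam-2)⁻¹)] := by
    ext i j
    rw [Matrix.add_apply, Matrix.mul_diagonal]
    fin_cases i <;> fin_cases j <;>
      norm_num [Cm, s5, Matrix.one_apply, Fin.ext_iff]
  rw [hM5, det5]
  rw [show 2 * c = (2 * c - 2) + 2 by omega, pow_add]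
  field_simp
  simp only [Nat.add_sub_cancel]
  ring

end Stmt4Aux

theorem stmt_4 (c : ℕ) (hc : 1 ≤ c) (lam : ℝ) :
    (distMatrix c c - lam • 1).det =
      (-lam - 2) ^ (2 * c - 2) * ((lam ^ 2 + (2 * c + 4) * lam + 4) *
        (-lam ^ 3 + 6 * c * lam ^ 2 + (12 * c + 6) * lam + 4 * c + 4)) := by
  have hF : Continuous fun l : ℝ => (distMatrix c c - l • 1).det :=
    (continuous_const.sub (continuous_id.smul continuous_const)).matrix_det
  have hG : Continuous fun l : ℝ =>
      (-l - 2) ^ (2 * c - 2) * ((l ^ 2 + (2 * c + 4) * l + 4) *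
        (-l ^ 3 + 6 * c * l ^ 2 + (12 * c + 6) * l + 4 * c + 4)) := by fun_prop
  have hdense : Dense ({(0:ℝ), -2}ᶜ) :=
    Set.Countable.dense_compl ℝ ((Set.toFinite _).countable)
  have heq : Set.EqOn (fun l : ℝ => (distMatrix c c - l • 1).det)
      (fun l : ℝ => (-l - 2) ^ (2 * c - 2) * ((l ^ 2 + (2 * c + 4) * l + 4) *
        (-l ^ 3 + 6 * c * l ^ 2 + (12 * c + 6) * l + 4 * c + 4))) ({(0:ℝ), -2}ᶜ) := by
    intro l hl
    simp only [Set.mem_compl_iff, Set.mem_insert_iff, Set.mem_singleton_iff, not_or] at hl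
    exact Stmt4Aux.det_good c hc l hl.1 (by intro h; apply hl.2; linarith)
  exact congrFun (Continuous.ext_on hdense hF hG heq) lam
end

section
/- For odd n = 2p+1, the distance matrix of the cycle Cₙ has eigenvalues (n²−1)/4 (simple) and −(1/4)·sec²(πj/n) with multiplicity 2 for each j = 1,…,p. -/
open Polynomial Matrix

/-- Graph distance along the cycle `Cₙ`: `min(|i-j|, n-|i-j|)`. -/
def cycDistNat (n : ℕ) (i j : Fin n) : ℕ :=
  min ((i.val + n - j.val) % n) ((j.val + n - i.val) % n)

/-- The distance matrix of the cycle `Cₙ`. -/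
noncomputable def cycDistMatrix (n : ℕ) : Matrix (Fin n) (Fin n) ℝ :=
  Matrix.of fun i j => (cycDistNat n i j : ℝ)

open Finset


lemma sumA {R : Type*} [CommRing R] (z : R) (p : ℕ) :
    (1 - z)^2 * ∑ e ∈ Finset.range (p+1), (e : R) * z^e
      = z - ((p:R)+1) * z^(p+1) + (p:R) * z^(p+2) := by
  induction p with
  | zero => simp
  | succ p ih =>
      rw [Finset.sum_range_succ, mul_add, ih]
      push_cast
      ring

lemma sumB {R : Type*} [CommRing R] (z : R) (p : ℕ) :
    (1 - z)^2 * ∑ d ∈ Finset.range p, ((p - d : ℕ) : R) * z^d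
      = (p:R) - ((p:R)+1)*z + z^(p+1) := by
  induction p with
  | zero => simp
  | succ p ih =>
      have hgeom : (∑ d ∈ Finset.range (p+1), z^d) * (z - 1) = z^(p+1) - 1 := geom_sum_mul z (p+1)
      have h1 : ∀ d ∈ Finset.range (p+1), ((p+1-d:ℕ):R) * z^d = ((p-d:ℕ):R)*z^d + z^d := by
        intro d hd
        have hd' : d ≤ p := by
          have := Finset.mem_range.mp hd; omega
        have h2 : (p+1-d : ℕ) = (p-d : ℕ)+1 := by omega
        rw [h2]; push_cast; ring
      rw [Finset.sum_congr rfl h1, Finset.sum_add_distrib,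
        Finset.sum_range_succ (f := fun d => ((p-d:ℕ):R)*z^d), Nat.sub_self]
      push_cast
      rw [mul_add]
      rw [show (1-z)^2 * (∑ d ∈ Finset.range p, ((p - d : ℕ):R) * z ^ d + 0 * z ^ p)
        = (1-z)^2 * ∑ d ∈ Finset.range p, ((p - d : ℕ):R) * z ^ d by ring, ih]
      linear_combination (z - 1) * hgeom

lemma sum_min (z : ℂ) (p : ℕ) :
    ∑ d ∈ Finset.range (2*p+1), ((min d (2*p+1-d) : ℕ) : ℂ) * z^d
      = ∑ e ∈ Finset.Icc 1 p, (e:ℂ) * (z^e + z^(2*p+1-e)) := by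
  have hsplit : Finset.range (2*p+1) = Finset.range (p+1) ∪ Finset.Ico (p+1) (2*p+1) := by
    rw [Finset.range_eq_Ico, Finset.range_eq_Ico, Finset.Ico_union_Ico_eq_Ico (by omega) (by omega)]
  rw [hsplit, Finset.sum_union (by
    simp only [Finset.disjoint_left, Finset.mem_range, Finset.mem_Ico]
    omega)]
  have h1 : ∑ d ∈ Finset.range (p+1), ((min d (2*p+1-d) : ℕ) : ℂ) * z^d
      = ∑ e ∈ Finset.Icc 1 p, (e:ℂ) * z^e := by
    rw [← Nat.Ico_zero_eq_range, Finset.sum_eq_sum_Ico_succ_bot (by omega)]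
    have h0 : ((min 0 (2*p+1-0) : ℕ) : ℂ) * z^0 = 0 := by
      norm_num
    rw [h0, zero_add, Finset.Ico_add_one_right_eq_Icc]
    refine Finset.sum_congr rfl fun d hd => ?_
    have hd' := Finset.mem_Icc.mp hd
    have : min d (2*p+1-d) = d := by omega
    rw [this]
  have h2 : ∑ d ∈ Finset.Ico (p+1) (2*p+1), ((min d (2*p+1-d) : ℕ) : ℂ) * z^d
      = ∑ e ∈ Finset.Icc 1 p, (e:ℂ) * z^(2*p+1-e) := by
    refine Finset.sum_nbij' (fun d => 2*p+1-d) (fun e => 2*p+1-e) ?_ ?_ ?_ ?_ ?_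
    · intro d hd; have := Finset.mem_Ico.mp hd; simp only [Finset.mem_Icc]; omega
    · intro e he; have := Finset.mem_Icc.mp he; simp only [Finset.mem_Ico]; omega
    · intro d hd; have := Finset.mem_Ico.mp hd; omega
    · intro e he; have := Finset.mem_Icc.mp he; omega
    · intro d hd
      have hd' := Finset.mem_Ico.mp hd
      have h3 : 2*p+1-(2*p+1-d) = d := by omega
      have h4 : min d (2*p+1-d) = 2*p+1-d := by omega
      rw [h3, h4]
  rw [h1, h2, ← Finset.sum_add_distrib]
  exact Finset.sum_congr rfl fun e he => by ring

lemma key_sum (p : ℕ) (v : ℂ) (hv1 : v ≠ 1) (hvn : v^(2*p+1) = 1) :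
    (1 + v)^2 * (∑ e ∈ Finset.Icc 1 p, (e:ℂ) * ((v^2)^e + (v^2)^(2*p+1-e))) = -v := by
  have hp1 : (v^2)^(p+1) = v := by
    rw [← pow_mul, show 2*(p+1) = (2*p+1)+1 by ring, pow_succ, hvn, one_mul]
  have hp2 : (v^2)^(p+2) = v^3 := by
    rw [← pow_mul, show 2*(p+2) = (2*p+1)+3 by ring, pow_add, hvn, one_mul]
  have hS : ∑ e ∈ Finset.Icc 1 p, (e:ℂ) * ((v^2)^e + (v^2)^(2*p+1-e))
      = (∑ e ∈ Finset.Icc 1 p, (e:ℂ) * (v^2)^e) + ∑ e ∈ Finset.Icc 1 p, (e:ℂ) * (v^2)^(2*p+1-e) := by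
    rw [← Finset.sum_add_distrib]; exact Finset.sum_congr rfl fun e he => by ring
  have hS1 : (1-v^2)^2 * ∑ e ∈ Finset.Icc 1 p, (e:ℂ) * (v^2)^e
      = v^2 - ((p:ℂ)+1) * v + (p:ℂ) * v^3 := by
    have hIcc : ∑ e ∈ Finset.Icc 1 p, (e:ℂ) * (v^2)^e
        = ∑ e ∈ Finset.range (p+1), (e:ℂ) * (v^2)^e := by
      rw [← Nat.Ico_zero_eq_range, Finset.sum_eq_sum_Ico_succ_bot (by omega)]
      norm_num
      rw [Finset.Ico_add_one_right_eq_Icc]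
    rw [hIcc, sumA, hp1, hp2]
  have hS2 : (1-v^2)^2 * ∑ e ∈ Finset.Icc 1 p, (e:ℂ) * (v^2)^(2*p+1-e)
      = v * ((p:ℂ) - ((p:ℂ)+1)*v^2 + v) := by
    have hS2W : ∑ e ∈ Finset.Icc 1 p, (e:ℂ) * (v^2)^(2*p+1-e)
        = (v^2)^(p+1) * ∑ d ∈ Finset.range p, ((p - d : ℕ) : ℂ) * (v^2)^d := by
      rw [Finset.mul_sum]
      refine Finset.sum_nbij' (fun e => p - e) (fun d => p - d) ?_ ?_ ?_ ?_ ?_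
      · intro e he; have := Finset.mem_Icc.mp he; simp only [Finset.mem_range]; omega
      · intro d hd; have := Finset.mem_range.mp hd; simp only [Finset.mem_Icc]; omega
      · intro e he; have := Finset.mem_Icc.mp he; omega
      · intro d hd; have := Finset.mem_range.mp hd; omega
      · intro e he
        have he' := Finset.mem_Icc.mp he
        have h3 : p - (p - e) = e := by omega
        have h4 : (2*p+1-e) = (p+1) + (p-e) := by omega
        rw [h3, h4, pow_add]
        ring
    rw [hS2W, hp1, ← mul_assoc, mul_comm ((1-v^2)^2) v, mul_assoc, sumB, hp1]
  have hfac : (1 - v)^2 * ((1 + v)^2 * (∑ e ∈ Finset.Icc 1 p, (e:ℂ) * ((v^2)^e + (v^2)^(2*p+1-e))) + v) = 0 := by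
    rw [hS]
    linear_combination hS1 + hS2
  rcases mul_eq_zero.mp hfac with h | h
  · exact absurd h (pow_ne_zero 2 (sub_ne_zero.mpr (Ne.symm hv1)))
  · exact eq_neg_of_add_eq_zero_left h


noncomputable def cw (n : ℕ) : ℂ := Complex.exp (2 * Real.pi * Complex.I / n)

noncomputable def lam (n k : ℕ) : ℂ :=
  ∑ d ∈ Finset.range n, ((min d (n - d) : ℕ) : ℂ) * (cw n ^ (2*k)) ^ d

noncomputable def Pmat (n : ℕ) : Matrix (Fin n) (Fin n) ℂ :=
  Matrix.of fun i k => (cw n ^ (2 * k.val)) ^ i.val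

lemma cw_pow_n {n : ℕ} (hn : n ≠ 0) : cw n ^ n = 1 := by
  rw [cw, ← Complex.exp_nat_mul]
  rw [mul_div_assoc', mul_comm, mul_div_assoc, div_self (by exact_mod_cast hn), mul_one,
    Complex.exp_two_pi_mul_I]

lemma pow_mod_eq {ζ : ℂ} {n : ℕ} (hζ : ζ^n = 1) (x : ℕ) : ζ^(x % n) = ζ^x := by
  conv_rhs => rw [← Nat.div_add_mod x n]
  rw [pow_add, pow_mul, hζ, one_pow, one_mul]

lemma zeta_pow_fin_add {n : ℕ} {ζ : ℂ} (hζ : ζ^n = 1) (a b : Fin n) :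
    ζ^((a+b).val) = ζ^a.val * ζ^b.val := by
  rw [Fin.val_add, pow_mod_eq hζ, pow_add]

lemma cycDist_eq {n : ℕ} (i j : Fin n) :
    cycDistNat n i j = min (j - i).val (n - (j - i).val) := by
  have hn : 0 < n := i.pos
  have key : ∀ a b : ℕ, a < n → b < n → (a + n - b) % n = if b ≤ a then a - b else a + n - b := by
    intro a b ha hb
    split
    · next h =>
      have h2 : a + n - b = (a - b) + n := by omega
      rw [h2, Nat.add_mod_right]
      exact Nat.mod_eq_of_lt (by omega)
    · next h => exact Nat.mod_eq_of_lt (by omega)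
  have hij := i.isLt; have hji := j.isLt
  rw [cycDistNat, Fin.sub_def]
  simp only
  have h1 : (n - i.val + j.val) % n = (j.val + n - i.val) % n := by congr 1; omega
  rw [h1, key _ _ hji hij, key _ _ hij hji]
  split <;> split <;> omega

lemma eigen_eq (p : ℕ) :
    (cycDistMatrix (2*p+1)).map (algebraMap ℝ ℂ) * Pmat (2*p+1)
      = Pmat (2*p+1) * Matrix.diagonal (fun k : Fin (2*p+1) => lam (2*p+1) k.val) := by
  set n := 2*p+1 with hn
  ext i k
  rw [Matrix.mul_diagonal, Matrix.mul_apply]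
  set ζ : ℂ := cw n ^ (2 * k.val) with hζ
  have hζn : ζ^n = 1 := by
    rw [hζ, ← pow_mul, mul_comm, pow_mul, cw_pow_n (by omega), one_pow]
  have hterm : ∀ j, (cycDistMatrix n).map (algebraMap ℝ ℂ) i j * Pmat n j k
      = ((min (j-i).val (n - (j-i).val) : ℕ) : ℂ) * ζ^(j.val) := by
    intro j
    simp only [cycDistMatrix, Pmat, Matrix.map_apply, Matrix.of_apply]
    rw [map_natCast, cycDist_eq]
  simp only [hterm]
  have hre : ∑ j : Fin n, ((min (j-i).val (n - (j-i).val) : ℕ) : ℂ) * ζ^(j.val)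
      = ∑ d : Fin n, ((min d.val (n - d.val) : ℕ) : ℂ) * (ζ^(i.val) * ζ^(d.val)) := by
    refine Fintype.sum_bijective (fun j : Fin n => j - i) (Equiv.subRight i).bijective _ _ fun j => ?_
    have hz : ζ^(j.val) = ζ^(i.val) * ζ^((j - i).val) := by
      rw [mul_comm, ← zeta_pow_fin_add hζn, sub_add_cancel]
    rw [hz]
  rw [hre]
  have : ∑ d : Fin n, ((min d.val (n - d.val) : ℕ) : ℂ) * (ζ^(i.val) * ζ^(d.val))
      = ζ^(i.val) * ∑ d : Fin n, ((min d.val (n - d.val) : ℕ) : ℂ) * ζ^(d.val) := by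
    rw [Finset.mul_sum]
    exact Finset.sum_congr rfl fun d _ => by ring
  rw [this]
  have hfin : ∑ d : Fin n, ((min d.val (n - d.val) : ℕ) : ℂ) * ζ^(d.val)
      = lam n k.val := by
    rw [lam, ← Fin.sum_univ_eq_sum_range (fun d => ((min d (n - d) : ℕ) : ℂ) * (cw n ^ (2*k.val)) ^ d) n]
  rw [hfin]
  rfl

lemma det_Pmat_ne_zero (p : ℕ) : (Pmat (2*p+1)).det ≠ 0 := by
  set n := 2*p+1 with hn
  have hprim : IsPrimitiveRoot (cw n) n := Complex.isPrimitiveRoot_exp n (by omega)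
  have hprim2 : IsPrimitiveRoot (cw n ^ 2) n :=
    hprim.pow_of_coprime 2 ((Nat.prime_two.coprime_iff_not_dvd).mpr (by omega))
  have hPform : Pmat n = (Matrix.vandermonde (fun k : Fin n => (cw n ^ 2) ^ k.val))ᵀ := by
    ext i k
    simp only [Pmat, Matrix.of_apply, Matrix.transpose_apply, Matrix.vandermonde]
    rw [← pow_mul, ← pow_mul]
    ring_nf
  rw [hPform, Matrix.det_transpose]
  refine Matrix.det_vandermonde_ne_zero_iff.mpr fun i j h => ?_
  exact Fin.val_injective (hprim2.pow_inj i.isLt j.isLt h)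

lemma charpoly_Dc (p : ℕ) :
    ((cycDistMatrix (2*p+1)).map (algebraMap ℝ ℂ)).charpoly
      = ∏ k : Fin (2*p+1), (X - C (lam (2*p+1) k.val)) := by
  set n := 2*p+1 with hn
  set D := (cycDistMatrix n).map (algebraMap ℝ ℂ) with hD
  set Λ := Matrix.diagonal (fun k : Fin n => lam n k.val) with hΛ
  have hQ : charmatrix D * (C : ℂ →+* ℂ[X]).mapMatrix (Pmat n)
      = (C : ℂ →+* ℂ[X]).mapMatrix (Pmat n) * charmatrix Λ := by
    rw [charmatrix, charmatrix, sub_mul, mul_sub]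
    congr 1
    · exact (Matrix.scalar_commute (X : ℂ[X]) (fun r => Commute.all _ _)
        ((C : ℂ →+* ℂ[X]).mapMatrix (Pmat n))).eq
    · rw [← _root_.map_mul (RingHom.mapMatrix (C : ℂ →+* ℂ[X])),
        ← _root_.map_mul (RingHom.mapMatrix (C : ℂ →+* ℂ[X])), eigen_eq p]
  have hdet := congrArg Matrix.det hQ
  rw [Matrix.det_mul, Matrix.det_mul] at hdet
  have hdP : ((C : ℂ →+* ℂ[X]).mapMatrix (Pmat n)).det = C ((Pmat n).det) :=
    (RingHom.map_det _ _).symm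
  rw [hdP, mul_comm (C ((Pmat n).det))] at hdet
  have hC0 : (C ((Pmat n).det) : ℂ[X]) ≠ 0 := by
    rw [Ne, Polynomial.C_eq_zero]
    exact det_Pmat_ne_zero p
  have hchar : D.charpoly = Λ.charpoly := mul_right_cancel₀ hC0 hdet
  rw [hchar]
  have hdiag : charmatrix Λ = Matrix.diagonal (fun k : Fin n => (X : ℂ[X]) - C (lam n k.val)) := by
    ext i j
    by_cases h : i = j
    · subst h
      rw [charmatrix_apply_eq, hΛ, Matrix.diagonal_apply_eq, Matrix.diagonal_apply_eq]
    · rw [charmatrix_apply_ne _ _ _ h, hΛ, Matrix.diagonal_apply_ne _ h,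
        Matrix.diagonal_apply_ne _ h, map_zero, neg_zero]
  rw [Matrix.charpoly, hdiag, Matrix.det_diagonal]

lemma lam_zero (p : ℕ) : lam (2*p+1) 0 = (p:ℂ) * ((p:ℂ)+1) := by
  have hgauss : ∀ q : ℕ, (∑ e ∈ Finset.Icc 1 q, e) * 2 = q*(q+1) := by
    intro q
    induction q with
    | zero => simp
    | succ q ih => rw [Finset.sum_Icc_succ_top (by omega), add_mul, ih]; ring
  rw [lam]
  have h1 : cw (2*p+1) ^ (2*0) = 1 := by norm_num
  rw [h1]
  have h := sum_min 1 p
  simp only [one_pow, mul_one] at h ⊢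
  rw [h]
  have : ∑ e ∈ Finset.Icc 1 p, (e:ℂ) * (1+1) = 2 * ((∑ e ∈ Finset.Icc 1 p, e : ℕ) : ℂ) := by
    push_cast
    rw [Finset.mul_sum]
    exact Finset.sum_congr rfl fun e _ => by ring
  rw [this]
  have h2 := hgauss p
  have : ((∑ e ∈ Finset.Icc 1 p, e : ℕ) : ℂ) * 2 = (p:ℂ)*((p:ℂ)+1) := by exact_mod_cast congrArg (Nat.cast : ℕ → ℂ) h2
  linear_combination this

lemma lam_ne (p : ℕ) (k : ℕ) (hk1 : 1 ≤ k) (hk2 : k ≤ 2*p) :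
    lam (2*p+1) k = Complex.ofReal (-(1/4) * (Real.cos (Real.pi * k / (2*p+1)))⁻¹^2) := by
  set n := 2*p+1 with hn
  set v : ℂ := cw n ^ k with hv
  have hprim : IsPrimitiveRoot (cw n) n := Complex.isPrimitiveRoot_exp n (by omega)
  have hvn : v^n = 1 := by rw [hv, ← pow_mul, mul_comm, pow_mul, cw_pow_n (by omega), one_pow]
  have hv1 : v ≠ 1 := hprim.pow_ne_one_of_pos_of_lt (by omega) (by omega)
  have hv0 : v ≠ 0 := by
    intro h
    rw [h, zero_pow (by omega)] at hvn
    exact zero_ne_one hvn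
  have hlam : lam n k = ∑ e ∈ Finset.Icc 1 p, (e:ℂ) * ((v^2)^e + (v^2)^(n-e)) := by
    rw [lam]
    have h2 : cw n ^ (2*k) = v^2 := by rw [hv, ← pow_mul, mul_comm 2 k]
    rw [h2, sum_min (v^2) p]
  have hkey := key_sum p v hv1 hvn
  set θ : ℝ := Real.pi * k / n with hθ
  have hθc : ((θ : ℝ) : ℂ) = (Real.pi : ℂ) * k / n := by
    rw [hθ]; push_cast; ring
  have hu : Complex.exp (θ * Complex.I) ^ 2 = v := by
    rw [← Complex.exp_nat_mul, hv, cw, ← Complex.exp_nat_mul]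
    congr 1
    rw [hθc]
    have hn0 : ((n:ℕ) : ℂ) ≠ 0 := by exact_mod_cast (by omega : n ≠ 0)
    field_simp
    ring
  have hcos : (1 + v) = Complex.exp (θ * Complex.I) * (2 * Complex.cos θ) := by
    rw [Complex.two_cos, mul_add, ← Complex.exp_add, ← Complex.exp_add]
    rw [show (θ:ℂ) * Complex.I + (θ:ℂ) * Complex.I = 2 * ((θ:ℂ)*Complex.I) by ring]
    rw [show (θ:ℂ) * Complex.I + -(θ:ℂ) * Complex.I = 0 by ring, Complex.exp_zero]
    have h2 : Complex.exp (2*((θ:ℂ)*Complex.I)) = v := by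
      rw [show (2:ℂ) = ((2:ℕ):ℂ) by norm_num, Complex.exp_nat_mul, hu]
    rw [h2]
    ring
  have hcosne : Real.cos θ ≠ 0 := by
    intro h
    rw [Real.cos_eq_zero_iff] at h
    obtain ⟨m, hm⟩ := h
    rw [hθ] at hm
    have hπ : Real.pi ≠ 0 := Real.pi_ne_zero
    have hnR : (n : ℝ) ≠ 0 := by exact_mod_cast (by omega : n ≠ 0)
    have h2 : (2:ℝ) * k = (2*m+1) * (2*(p:ℝ)+1) := by
      apply mul_left_cancel₀ hπ
      field_simp [hn] at hm
      linear_combination Real.pi * hm + Real.pi * (2*m+1) * (by rw [hn]; push_cast; ring : (n:ℝ) = 2*p+1)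
    have hint : (2 * k : ℤ) = (2*m+1) * (2*p+1) := by exact_mod_cast h2
    have h3 : (2 * k : ℤ) = 2*(m*(2*p+1)) + 2*p+1 := by linear_combination hint
    omega
  have hcosc : Complex.cos θ ≠ 0 := by
    rw [← Complex.ofReal_cos]
    exact_mod_cast hcosne
  -- (1+v)^2 = v * (2 cos θ)^2
  have hsq : (1 + v)^2 = v * (2 * Complex.cos θ)^2 := by
    rw [hcos, mul_pow, hu]
  rw [hsq] at hkey
  have hS : lam n k = -(1/4) * (Complex.cos θ)⁻¹^2 := by
    rw [hlam]
    have h2 : (2 * Complex.cos θ) ≠ 0 := by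
      intro h; apply hcosc
      have := mul_eq_zero.mp h
      rcases this with h | h
      · norm_num at h
      · exact h
    have h2c : (2*Complex.cos (θ:ℂ)) ≠ 0 := by
      exact mul_ne_zero two_ne_zero hcosc
    have h5 : (2*Complex.cos (θ:ℂ))^2 * (∑ e ∈ Finset.Icc 1 p, (e:ℂ) * ((v^2)^e + (v^2)^(2*p+1-e))) = -1 :=
      mul_left_cancel₀ hv0 (by linear_combination hkey)
    have h6 : (∑ e ∈ Finset.Icc 1 p, (e:ℂ) * ((v^2)^e + (v^2)^(2*p+1-e)))
        = ((2*Complex.cos (θ:ℂ))^2)⁻¹ * (-1) := by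
      rw [← h5, ← mul_assoc, inv_mul_cancel₀ (pow_ne_zero 2 h2c), one_mul]
    have hsame : (∑ e ∈ Finset.Icc 1 p, (e:ℂ) * ((v^2)^e + (v^2)^(n-e)))
        = ∑ e ∈ Finset.Icc 1 p, (e:ℂ) * ((v^2)^e + (v^2)^(2*p+1-e)) := rfl
    rw [hsame, h6]
    field_simp
    ring
  have hθ' : Real.pi * (k:ℝ) / (2*(p:ℝ)+1) = θ := by rw [hθ]; push_cast [hn]; ring
  rw [hS, hθ']
  rw [Complex.ofReal_mul, Complex.ofReal_pow, Complex.ofReal_inv, Complex.ofReal_cos]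
  norm_num

lemma hterm_ne (p : ℕ) (k : ℕ) (h1 : 1 ≤ k) (h2 : k ≤ 2*p) :
    (X : ℂ[X]) - C (lam (2*p+1) k)
      = X + C (Complex.ofReal ((1/4)*(Real.cos (Real.pi*(k:ℝ)/(2*(p:ℝ)+1)))⁻¹^2)) := by
  rw [lam_ne p k h1 h2]
  have h3 : Complex.ofReal (-(1/4) * (Real.cos (Real.pi * (k:ℝ) / (2*(p:ℝ)+1)))⁻¹^2)
      = -(Complex.ofReal ((1/4) * (Real.cos (Real.pi * (k:ℝ) / (2*(p:ℝ)+1)))⁻¹^2)) := by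
    push_cast
    ring
  rw [h3, map_neg, sub_neg_eq_add]

lemma prod_eq (p : ℕ) (hp : 1 ≤ p) :
    ∏ k : Fin (2*p+1), ((X : ℂ[X]) - C (lam (2*p+1) k.val))
      = (X - C (Complex.ofReal ((((2*p+1:ℕ):ℝ)^2 - 1)/4)))
        * ∏ j ∈ Finset.Icc 1 p,
            (X + C (Complex.ofReal ((1/4)*(Real.cos (Real.pi*(j:ℝ)/(2*(p:ℝ)+1)))⁻¹^2)))^2 := by
  rw [Fin.prod_univ_eq_prod_range (fun k => (X : ℂ[X]) - C (lam (2*p+1) k)) (2*p+1)]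
  rw [Finset.range_eq_Ico, Finset.prod_eq_prod_Ico_succ_bot (by omega)]
  have h0 : (X : ℂ[X]) - C (lam (2*p+1) 0) = X - C (Complex.ofReal ((((2*p+1:ℕ):ℝ)^2 - 1)/4)) := by
    rw [lam_zero p]
    congr 1
    congr 1
    have : ((((2*p+1:ℕ):ℝ)^2 - 1)/4) = (p:ℝ)*((p:ℝ)+1) := by push_cast; field_simp; ring
    rw [this]
    push_cast
    ring
  rw [h0]
  congr 1
  rw [← Finset.prod_Ico_consecutive (fun k => (X : ℂ[X]) - C (lam (2*p+1) k))
    (by omega : 1 ≤ p+1) (by omega : p+1 ≤ 2*p+1)]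
  have hfirst : ∏ k ∈ Finset.Ico 1 (p+1), ((X : ℂ[X]) - C (lam (2*p+1) k))
      = ∏ j ∈ Finset.Icc 1 p,
          (X + C (Complex.ofReal ((1/4)*(Real.cos (Real.pi*(j:ℝ)/(2*(p:ℝ)+1)))⁻¹^2))) := by
    rw [Finset.Ico_add_one_right_eq_Icc]
    refine Finset.prod_congr rfl fun k hk => ?_
    have hk' := Finset.mem_Icc.mp hk
    exact hterm_ne p k (by omega) (by omega)
  have hsecond : ∏ k ∈ Finset.Ico (p+1) (2*p+1), ((X : ℂ[X]) - C (lam (2*p+1) k))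
      = ∏ j ∈ Finset.Icc 1 p,
          (X + C (Complex.ofReal ((1/4)*(Real.cos (Real.pi*(j:ℝ)/(2*(p:ℝ)+1)))⁻¹^2))) := by
    refine Finset.prod_nbij' (fun k => 2*p+1-k) (fun j => 2*p+1-j) ?_ ?_ ?_ ?_ ?_
    · intro k hk; have := Finset.mem_Ico.mp hk; simp only [Finset.mem_Icc]; omega
    · intro j hj; have := Finset.mem_Icc.mp hj; simp only [Finset.mem_Ico]; omega
    · intro k hk; have := Finset.mem_Ico.mp hk; omega
    · intro j hj; have := Finset.mem_Icc.mp hj; omega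
    · intro k hk
      have hk' := Finset.mem_Ico.mp hk
      rw [hterm_ne p k (by omega) (by omega)]
      congr 2
      have hflip : Real.pi * ((2*p+1-k : ℕ):ℝ) / (2*(p:ℝ)+1)
          = Real.pi - Real.pi * (k:ℝ) / (2*(p:ℝ)+1) := by
        rw [Nat.cast_sub (by omega)]
        push_cast
        have h21 : (2*(p:ℝ)+1) ≠ 0 := by positivity
        field_simp
      rw [hflip, Real.cos_pi_sub, inv_neg, neg_pow]
      norm_num
  rw [hfirst, hsecond, ← Finset.prod_mul_distrib]
  exact Finset.prod_congr rfl fun j _ => (sq _).symm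

theorem stmt_9 (p : ℕ) (hp : 1 ≤ p) :
    (cycDistMatrix (2 * p + 1)).charpoly =
      (X - C ((((2 * p + 1 : ℕ) : ℝ) ^ 2 - 1) / 4)) *
        ∏ j ∈ Finset.Icc 1 p,
          (X + C ((1 / 4) * (Real.cos (Real.pi * j / (2 * p + 1)))⁻¹ ^ 2)) ^ 2 := by
  apply Polynomial.map_injective (algebraMap ℝ ℂ) (algebraMap ℝ ℂ).injective
  rw [← Matrix.charpoly_map, charpoly_Dc p, prod_eq p hp]
  rw [Polynomial.map_mul, Polynomial.map_sub, Polynomial.map_X, Polynomial.map_C,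
    Polynomial.map_prod]
  congr 1
  refine Finset.prod_congr rfl fun j hj => ?_
  rw [Polynomial.map_pow, Polynomial.map_add, Polynomial.map_X, Polynomial.map_C]
  norm_num
end

section
/- For even n = 2p, the distance matrix of the cycle Cₙ has eigenvalues n²/4 (simple), 0 with multiplicity p−1, −csc²(π(2j−1)/n) with multiplicity 2 for j = 1,…,⌊p/2⌋, and additionally −1 if p is odd. -/
open Polynomial Matrix

section Aux
open Finset Complex

noncomputable def sVal (n : ℕ) (x : ℂ) : ℂ :=
  ∑ m ∈ Finset.range n, ((min m (n - m) : ℕ) : ℂ) * x ^ m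

lemma sVal_eq_double (p : ℕ) (x : ℂ) :
    sVal (2 * p) x = ∑ t ∈ Finset.Icc 1 p, ∑ m ∈ Finset.Ico t (2 * p + 1 - t), x ^ m := by
  unfold sVal
  have h1 : ∀ m ∈ Finset.range (2 * p),
      ((min m (2 * p - m) : ℕ) : ℂ) * x ^ m
        = ∑ t ∈ Finset.Icc 1 p, if t ≤ m ∧ m + t ≤ 2 * p then x ^ m else 0 := by
    intro m hm
    simp only [Finset.mem_range] at hm
    have hf : ((Finset.Icc 1 p).filter fun t => t ≤ m ∧ m + t ≤ 2 * p)
        = Finset.Icc 1 (min m (2 * p - m)) := by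
      ext t
      simp only [Finset.mem_filter, Finset.mem_Icc, le_min_iff]
      omega
    rw [← Finset.sum_filter, hf, Finset.sum_const, Nat.card_Icc, nsmul_eq_mul,
      Nat.add_sub_cancel]
  rw [Finset.sum_congr rfl h1, Finset.sum_comm]
  refine Finset.sum_congr rfl fun t ht => ?_
  simp only [Finset.mem_Icc] at ht
  rw [← Finset.sum_filter]
  congr 1
  ext m
  simp only [Finset.mem_filter, Finset.mem_range, Finset.mem_Ico]
  omega

lemma sVal_mul (p : ℕ) (hp : 1 ≤ p) (x : ℂ) :
    sVal (2 * p) x * (x - 1) ^ 2 = (x ^ (p + 1) - x) * (x ^ p - 1) := by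
  have h2 := sVal_eq_double p x
  have h3 : sVal (2 * p) x * (x - 1)
      = ∑ t ∈ Finset.Icc 1 p, (x ^ (2 * p + 1 - t) - x ^ t) := by
    rw [h2, Finset.sum_mul]
    refine Finset.sum_congr rfl fun t ht => ?_
    simp only [Finset.mem_Icc] at ht
    exact geom_sum_Ico_mul x (by omega)
  have h4 : ∑ t ∈ Finset.Icc 1 p, (x ^ (2 * p + 1 - t) - x ^ t)
      = (x ^ (p + 1) - x) * ∑ s ∈ Finset.range p, x ^ s := by
    rw [Finset.sum_sub_distrib, sub_mul, Finset.mul_sum, Finset.mul_sum]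
    congr 1
    · rw [show Finset.Icc 1 p = Finset.Ico 1 (p + 1) by ext a; simp [Nat.lt_succ_iff],
        Finset.sum_Ico_eq_sum_range]
      rw [← Finset.sum_range_reflect]
      refine Finset.sum_congr (by rw [Nat.add_sub_cancel]) fun s hs => ?_
      simp only [Finset.mem_range] at hs
      rw [← pow_add]
      congr 1
      omega
    · rw [show Finset.Icc 1 p = Finset.Ico 1 (p + 1) by ext a; simp [Nat.lt_succ_iff],
        Finset.sum_Ico_eq_sum_range]
      refine Finset.sum_congr (by rw [Nat.add_sub_cancel]) fun s hs => ?_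
      rw [pow_add, pow_one]
  rw [sq, ← mul_assoc, h3, h4, mul_assoc, geom_sum_mul]

lemma sVal_one (p : ℕ) : sVal (2 * p) 1 = (p : ℂ) ^ 2 := by
  rw [sVal_eq_double]
  have : ∀ t ∈ Finset.Icc 1 p, (∑ m ∈ Finset.Ico t (2 * p + 1 - t), (1:ℂ) ^ m)
      = ((2 * p + 1 - 2 * t : ℕ) : ℂ) := by
    intro t ht
    simp only [Finset.mem_Icc] at ht
    simp only [one_pow, Finset.sum_const, Nat.card_Ico, nsmul_eq_mul, mul_one]
    congr 1
    omega
  rw [Finset.sum_congr rfl this]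
  have hc : ∀ t ∈ Finset.Icc 1 p, ((2 * p + 1 - 2 * t : ℕ) : ℂ) = (2 * p + 1 : ℂ) - 2 * t := by
    intro t ht
    simp only [Finset.mem_Icc] at ht
    push_cast [Nat.cast_sub (by omega : 2 * t ≤ 2 * p + 1)]
    ring
  rw [Finset.sum_congr rfl hc, Finset.sum_sub_distrib, Finset.sum_const, Nat.card_Icc,
    ← Finset.mul_sum]
  have hsum : ∑ t ∈ Finset.Icc 1 p, (t : ℂ) = p * (p + 1) / 2 := by
    have hn : ∀ q : ℕ, (∑ t ∈ Finset.Icc 1 q, t) * 2 = q * (q + 1) := by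
      intro q
      induction q with
      | zero => simp
      | succ q ih =>
        rw [show Finset.Icc 1 (q + 1) = insert (q + 1) (Finset.Icc 1 q) by
          ext a; simp [Nat.lt_succ_iff]; omega]
        rw [Finset.sum_insert (by simp), add_mul, ih]
        ring
    have h := congrArg (fun k : ℕ => (k : ℂ)) (hn p)
    push_cast at h
    field_simp
    linear_combination h
  rw [hsum, Nat.add_sub_cancel, nsmul_eq_mul]
  ring


end Aux

section Aux2
open Finset Complex

lemma cycDistNat_shift {n : ℕ} (i m : Fin n) :
    cycDistNat n i (i + m) = min m.val (n - m.val) := by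
  have hn : 0 < n := i.pos
  have ha : i.val < n := i.isLt
  have hb : m.val < n := m.isLt
  have hadd : (i + m).val = (i.val + m.val) % n := by
    simp [Fin.add_def]
  unfold cycDistNat
  rw [hadd]
  rcases Nat.eq_zero_or_pos m.val with hm | hm
  · rw [hm]
    simp only [Nat.add_zero, Nat.mod_eq_of_lt ha]
    rw [show i.val + n - i.val = n by omega, Nat.mod_self]
    simp
  · rcases lt_or_ge (i.val + m.val) n with hc | hc
    · rw [Nat.mod_eq_of_lt hc]
      rw [show i.val + n - (i.val + m.val) = n - m.val by omega,
        Nat.mod_eq_of_lt (by omega),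
        show i.val + m.val + n - i.val = n + m.val by omega,
        Nat.add_mod_left, Nat.mod_eq_of_lt hb]
      omega
    · rw [show (i.val + m.val) % n = i.val + m.val - n by
        rw [Nat.mod_eq_sub_mod hc, Nat.mod_eq_of_lt (by omega)]]
      rw [show i.val + n - (i.val + m.val - n) = n + (n - m.val) by omega,
        Nat.add_mod_left, Nat.mod_eq_of_lt (by omega),
        show i.val + m.val - n + n - i.val = m.val by omega,
        Nat.mod_eq_of_lt hb]
      omega

section MatrixPart

variable {n : ℕ}

lemma pow_mod_eq_s10 {ω : ℂ} (hω : ω ^ n = 1) (a : ℕ) : ω ^ a = ω ^ (a % n) := by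
  conv_lhs => rw [← Nat.div_add_mod a n]
  rw [pow_add, pow_mul, hω, one_pow, one_mul]

lemma charpoly_cyc (hn : 0 < n) (ω : ℂ) (hprim : IsPrimitiveRoot ω n) :
    (cycDistMatrix n).charpoly.map Complex.ofRealHom
      = ∏ k ∈ Finset.range n, (X - C (sVal n (ω ^ k))) := by
  classical
  haveI : NeZero n := ⟨hn.ne'⟩
  set A : Matrix (Fin n) (Fin n) ℂ := (cycDistMatrix n).map Complex.ofRealHom with hA
  set W : Matrix (Fin n) (Fin n) ℂ := Matrix.vandermonde (fun i : Fin n => ω ^ (i : ℕ)) with hWdef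
  set d : Fin n → ℂ := fun k => sVal n (ω ^ (k : ℕ)) with hd
  have hω1 : ω ^ n = 1 := hprim.pow_eq_one
  -- step 1 : A * W = W * diagonal d
  have hAW : A * W = W * Matrix.diagonal d := by
    ext i k
    rw [Matrix.mul_apply, Matrix.mul_diagonal]
    rw [← Fintype.sum_equiv (Equiv.addLeft i)
      (fun m : Fin n => A i (i + m) * W (i + m) k) (fun j => A i j * W j k) (fun m => rfl)]
    have hterm : ∀ m : Fin n,
        A i (i + m) * W (i + m) k
          = ω ^ (i.val * k.val) * (((min m.val (n - m.val) : ℕ) : ℂ) * (ω ^ (k.val)) ^ m.val) := by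
      intro m
      have h1 : A i (i + m) = ((min m.val (n - m.val) : ℕ) : ℂ) := by
        show Complex.ofRealHom ((cycDistNat n i (i + m) : ℝ)) = _
        rw [cycDistNat_shift]
        norm_cast
      have h2 : W (i + m) k = ω ^ (i.val * k.val) * ω ^ (m.val * k.val) := by
        simp only [hWdef, Matrix.vandermonde_apply]
        rw [← pow_mul, ← pow_add, ← Nat.add_mul]
        rw [pow_mod_eq_s10 hω1 ((i + m).val * k.val), pow_mod_eq_s10 hω1 ((i.val + m.val) * k.val)]
        congr 1
        have : (i + m).val = (i.val + m.val) % n := by simp [Fin.add_def]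
        rw [this, Nat.mod_mul_mod]
      rw [h1, h2, ← pow_mul]
      ring
    rw [Fintype.sum_congr _ _ hterm, ← Finset.mul_sum]
    have : ∑ m : Fin n, ((min m.val (n - m.val) : ℕ) : ℂ) * (ω ^ k.val) ^ m.val
        = sVal n (ω ^ k.val) := by
      rw [sVal]
      exact Fin.sum_univ_eq_sum_range (fun m => ((min m (n - m) : ℕ) : ℂ) * (ω ^ k.val) ^ m) n
    rw [this]
    simp only [hWdef, Matrix.vandermonde_apply, hd, ← pow_mul]
  -- step 2 : det W ≠ 0
  have hWdet : W.det ≠ 0 := by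
    rw [hWdef, Matrix.det_vandermonde_ne_zero_iff]
    intro a b hab
    exact Fin.val_injective (hprim.pow_inj a.isLt b.isLt hab)
  -- step 3 : charmatrix identity
  have hconj : charmatrix A * W.map C = W.map C * charmatrix (Matrix.diagonal d) := by
    unfold charmatrix
    rw [sub_mul, mul_sub]
    congr 1
    · exact (Matrix.scalar_commute (X : ℂ[X]) (fun r' => Commute.all _ _) (W.map C)).eq
    · rw [RingHom.mapMatrix_apply, RingHom.mapMatrix_apply, ← Matrix.map_mul, ← Matrix.map_mul,
        hAW]
  have hdet := congrArg Matrix.det hconj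
  rw [Matrix.det_mul, Matrix.det_mul] at hdet
  have hWC : (W.map C).det ≠ 0 := by
    rw [← RingHom.mapMatrix_apply, ← RingHom.map_det]
    simpa using hWdet
  have hchar : A.charpoly = (Matrix.diagonal d).charpoly := by
    have : A.charpoly * (W.map C).det = (W.map C).det * (Matrix.diagonal d).charpoly := hdet
    rw [mul_comm] at this
    exact mul_left_cancel₀ hWC this
  have hdiag : (Matrix.diagonal d).charpoly = ∏ k : Fin n, (X - C (d k)) := by
    have hcm : charmatrix (Matrix.diagonal d) = Matrix.diagonal (fun k => X - C (d k)) := by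
      ext i j
      by_cases h : i = j
      · subst h; simp
      · simp [h, Matrix.diagonal_apply_ne _ h]
    rw [Matrix.charpoly, hcm, Matrix.det_diagonal]
  rw [← Matrix.charpoly_map, hchar, hdiag, hd]
  exact Fin.prod_univ_eq_prod_range (fun k => (X - C (sVal n (ω ^ k)))) n

end MatrixPart

lemma exp_sub_one_sq (θ : ℂ) :
    (Complex.exp (2 * θ * Complex.I) - 1) ^ 2
      = -4 * Complex.exp (2 * θ * Complex.I) * Complex.sin θ ^ 2 := by
  have h2 : Complex.exp (θ * Complex.I) - Complex.exp (-θ * Complex.I)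
      = 2 * Complex.sin θ * Complex.I := by
    rw [show -θ * Complex.I = -(θ * Complex.I) by ring] at *
    rw [Complex.exp_mul_I, show -(θ*Complex.I) = (-θ)*Complex.I by ring, Complex.exp_mul_I,
      Complex.cos_neg, Complex.sin_neg]
    ring
  have h1 : Complex.exp (2 * θ * Complex.I) - 1
      = Complex.exp (θ * Complex.I) * (Complex.exp (θ * Complex.I) - Complex.exp (-θ * Complex.I)) := by
    rw [mul_sub, ← Complex.exp_add, ← Complex.exp_add,
      show θ * Complex.I + θ * Complex.I = 2 * θ * Complex.I by ring,
      show θ * Complex.I + -θ * Complex.I = 0 by ring, Complex.exp_zero]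
  rw [h1, h2]
  rw [show (Complex.exp (θ*Complex.I) * (2 * Complex.sin θ * Complex.I)) ^ 2
      = Complex.exp (θ*Complex.I) * Complex.exp (θ*Complex.I) * (4 * Complex.sin θ ^ 2 * Complex.I ^ 2) by ring,
    ← Complex.exp_add, show θ * Complex.I + θ * Complex.I = 2 * θ * Complex.I by ring,
    Complex.I_sq]
  ring

section Eigen

variable (p : ℕ)

noncomputable def ωc (p : ℕ) : ℂ := Complex.exp (2 * Real.pi * Complex.I / (2 * p))

lemma omega_pow_p (hp : 1 ≤ p) : (ωc p) ^ p = -1 := by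
  rw [ωc, ← Complex.exp_nat_mul,
    show (p : ℂ) * (2 * Real.pi * Complex.I / (2 * p)) = Real.pi * Complex.I by
      have : (p : ℂ) ≠ 0 := Nat.cast_ne_zero.2 (by omega)
      field_simp]
  exact Complex.exp_pi_mul_I

lemma omega_prim (hp : 1 ≤ p) : IsPrimitiveRoot (ωc p) (2 * p) := by
  have h := Complex.isPrimitiveRoot_exp (2 * p) (by omega)
  rw [show ((2 * p : ℕ) : ℂ) = 2 * (p : ℂ) by push_cast; ring] at h
  exact h

lemma sVal_zero_eigen (hp : 1 ≤ p) (j : ℕ) (hj1 : 1 ≤ j) (hj : j < p) :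
    sVal (2 * p) ((ωc p) ^ (2 * j)) = 0 := by
  have hprim : IsPrimitiveRoot (ωc p) (2 * p) := omega_prim p hp
  set x := (ωc p) ^ (2 * j) with hx
  have hxp : x ^ p = 1 := by
    rw [hx, ← pow_mul, show 2 * j * p = 2 * p * j by ring, pow_mul, hprim.pow_eq_one, one_pow]
  have hx1 : x ≠ 1 := hprim.pow_ne_one_of_pos_of_lt (by omega) (by omega)
  have hmain := sVal_mul p hp x
  rw [hxp] at hmain
  simp only [sub_self, mul_zero] at hmain
  have : (x - 1) ^ 2 ≠ 0 := pow_ne_zero _ (sub_ne_zero.2 hx1)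
  exact (mul_eq_zero.1 hmain).resolve_right this

lemma sVal_odd_eigen (hp : 1 ≤ p) (j : ℕ) (hj : j < p) :
    sVal (2 * p) ((ωc p) ^ (2 * j + 1))
      = -(((Real.sin (Real.pi * (2 * j + 1) / (2 * p)))⁻¹ ^ 2 : ℝ) : ℂ) := by
  have hp0 : (p : ℝ) ≠ 0 := Nat.cast_ne_zero.2 (by omega)
  set k := 2 * j + 1 with hk
  set θ : ℝ := Real.pi * k / (2 * p) with hθ
  have hθpos : 0 < θ := by
    apply div_pos (by positivity)
    positivity
  have hθlt : θ < Real.pi := by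
    rw [hθ, div_lt_iff₀ (by positivity)]
    have hk2p : (k : ℝ) < 2 * p := by
      have : k < 2 * p := by omega
      exact_mod_cast this
    nlinarith [Real.pi_pos]
  have hsinpos : 0 < Real.sin θ := Real.sin_pos_of_pos_of_lt_pi hθpos hθlt
  have hsinne : (Real.sin θ : ℂ) ≠ 0 := by exact_mod_cast hsinpos.ne'
  set x := (ωc p) ^ k with hxd
  have hx : x = Complex.exp (2 * (θ : ℂ) * Complex.I) := by
    rw [hxd, ωc, ← Complex.exp_nat_mul]
    congr 1
    rw [hθ]
    push_cast
    have hpC : (p : ℂ) ≠ 0 := Nat.cast_ne_zero.2 (by omega)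
    field_simp
  have hxne : x ≠ 0 := by rw [hx]; exact Complex.exp_ne_zero _
  have hxp : x ^ p = -1 := by
    rw [hxd, ← pow_mul, mul_comm k p, pow_mul, omega_pow_p p hp]
    exact Odd.neg_one_pow ⟨j, by omega⟩
  have hsq : (x - 1) ^ 2 = -4 * x * (Real.sin θ : ℂ) ^ 2 := by
    rw [hx, exp_sub_one_sq, Complex.ofReal_sin]
  have hmain := sVal_mul p hp x
  rw [hsq, show x ^ (p + 1) = x ^ p * x from pow_succ x p, hxp] at hmain
  have hgoal : sVal (2 * p) x * (Real.sin θ : ℂ) ^ 2 = -1 := by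
    have h4x : (-4 : ℂ) * x ≠ 0 := mul_ne_zero (by norm_num) hxne
    apply mul_left_cancel₀ h4x
    linear_combination hmain
  have harg : Real.pi * (2 * (j:ℝ) + 1) / (2 * p) = θ := by
    rw [hθ, hk]; push_cast; ring
  rw [harg, show (-(((Real.sin θ)⁻¹ ^ 2 : ℝ)) : ℂ) = -((Real.sin θ : ℂ) ^ 2)⁻¹ by
    rw [Complex.ofReal_pow, Complex.ofReal_inv, inv_pow]]
  have hs2 : (Real.sin θ : ℂ) ^ 2 ≠ 0 := pow_ne_zero _ hsinne
  rw [eq_div_of_mul_eq hs2 hgoal]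
  ring

end Eigen

noncomputable def gPoly (p j : ℕ) : Polynomial ℂ :=
  X + C ((((Real.sin (Real.pi * (2 * j + 1) / (2 * p)))⁻¹ ^ 2 : ℝ)) : ℂ)

lemma prod_range_two_mul {M : Type*} [CommMonoid M] (f : ℕ → M) (p : ℕ) :
    ∏ k ∈ Finset.range (2 * p), f k = ∏ j ∈ Finset.range p, (f (2 * j) * f (2 * j + 1)) := by
  induction p with
  | zero => simp
  | succ q ih =>
    rw [show 2 * (q + 1) = 2 * q + 1 + 1 by ring, Finset.prod_range_succ, Finset.prod_range_succ,
      Finset.prod_range_succ, ih, mul_assoc]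

lemma gPoly_symm (p j : ℕ) (hp : 1 ≤ p) (hj : j < p) : gPoly p (p - 1 - j) = gPoly p j := by
  unfold gPoly
  congr 2
  have h1 : (2 * (p - 1 - j) + 1 : ℕ) = 2 * p - (2 * j + 1) := by omega
  have h2 : ((2 * (p - 1 - j) : ℕ) : ℝ) + 1 = 2 * (p : ℝ) - (2 * j + 1) := by
    rw [show ((2 * (p - 1 - j) : ℕ) : ℝ) = ((2 * (p - 1 - j) + 1 : ℕ) : ℝ) - 1 by push_cast; ring,
      h1]
    rw [Nat.cast_sub (by omega)]
    push_cast
    ring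
  rw [show Real.pi * (2 * ((p - 1 - j : ℕ) : ℝ) + 1) / (2 * p)
      = Real.pi - Real.pi * (2 * (j:ℝ) + 1) / (2 * p) by
    have hp0 : (p : ℝ) ≠ 0 := Nat.cast_ne_zero.2 (by omega)
    rw [show 2 * ((p - 1 - j : ℕ) : ℝ) + 1 = ((2 * (p - 1 - j) : ℕ) : ℝ) + 1 by push_cast; ring,
      h2]
    field_simp]
  rw [Real.sin_pi_sub]

lemma gPoly_mid (q : ℕ) : gPoly (2 * q + 1) q = X + 1 := by
  unfold gPoly
  rw [show Real.pi * (2 * (q:ℝ) + 1) / (2 * (((2 * q + 1 : ℕ)) : ℝ)) = Real.pi / 2 by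
    have : ((2 * q + 1 : ℕ) : ℝ) = 2 * (q : ℝ) + 1 := by push_cast; ring
    rw [this]
    have h0 : (2 * (q:ℝ) + 1) ≠ 0 := by positivity
    field_simp]
  rw [Real.sin_pi_div_two]
  norm_num

lemma prod_gPoly (p : ℕ) (hp : 1 ≤ p) :
    ∏ j ∈ Finset.range p, gPoly p j
      = (∏ j ∈ Finset.range (p / 2), (gPoly p j) ^ 2) * (if Odd p then X + 1 else 1) := by
  rcases Nat.even_or_odd p with ⟨q, hq⟩ | ⟨q, hq⟩
  · subst hq
    have hq1 : 1 ≤ q := by omega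
    rw [if_neg (by rw [Nat.odd_iff]; omega), show (q + q) / 2 = q by omega, mul_one]
    rw [Finset.prod_range_add (gPoly (q + q)) q q]
    have hstep : ∀ i ∈ Finset.range q, gPoly (q + q) (q + i) = gPoly (q + q) (q - 1 - i) := by
      intro i hi
      simp only [Finset.mem_range] at hi
      rw [← gPoly_symm (q + q) (q + i) (by omega) (by omega)]
      congr 1
      omega
    rw [Finset.prod_congr rfl hstep, Finset.prod_range_reflect (fun i => gPoly (q + q) i) q]
    have hsq : ∀ j ∈ Finset.range q, gPoly (q + q) j ^ 2 = gPoly (q + q) j * gPoly (q + q) j :=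
      fun j _ => sq (gPoly (q + q) j)
    rw [Finset.prod_congr rfl hsq, Finset.prod_mul_distrib]
  · have hq2 : p / 2 = q := by omega
    have hodd : Odd p := ⟨q, hq⟩
    rw [if_pos hodd, hq2]
    rw [show Finset.range p = Finset.range (q + (q + 1)) by congr 1; omega]
    rw [Finset.prod_range_add (gPoly p) q (q + 1)]
    rw [Finset.prod_range_succ' (fun i => gPoly p (q + i)) q]
    have hstep : ∀ i ∈ Finset.range q, gPoly p (q + (i + 1)) = gPoly p (q - 1 - i) := by
      intro i hi
      simp only [Finset.mem_range] at hi
      rw [← gPoly_symm p (q + (i + 1)) (by omega) (by omega)]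
      congr 1
      omega
    rw [Finset.prod_congr rfl hstep, Finset.prod_range_reflect (fun i => gPoly p i) q]
    have hmid : gPoly p (q + 0) = X + 1 := by
      rw [Nat.add_zero, show p = 2 * q + 1 by omega]
      exact gPoly_mid q
    rw [hmid]
    have : ∀ j ∈ Finset.range q, gPoly p j ^ 2 = gPoly p j * gPoly p j := fun j _ => sq (gPoly p j)
    rw [Finset.prod_congr rfl this, Finset.prod_mul_distrib]
    ring

theorem stmt_10 (p : ℕ) (hp : 2 ≤ p) :
    (cycDistMatrix (2 * p)).charpoly =
      (X - C (((2 * p : ℕ) : ℝ) ^ 2 / 4)) * X ^ (p - 1) *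
        (∏ j ∈ Finset.Icc 1 (p / 2),
          (X + C ((Real.sin (Real.pi * (2 * j - 1) / (2 * p)))⁻¹ ^ 2)) ^ 2) *
        (if Odd p then X + 1 else 1) := by
  have hp1 : 1 ≤ p := by omega
  apply Polynomial.map_injective Complex.ofRealHom Complex.ofReal_injective
  rw [charpoly_cyc (by omega) (ωc p) (omega_prim p hp1)]
  rw [prod_range_two_mul (fun k => X - C (sVal (2 * p) ((ωc p) ^ k))) p,
    Finset.prod_mul_distrib]
  have hEven : ∏ j ∈ Finset.range p, (X - C (sVal (2 * p) ((ωc p) ^ (2 * j))))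
      = (X - C ((p : ℂ) ^ 2)) * X ^ (p - 1) := by
    obtain ⟨q, rfl⟩ : ∃ q, p = q + 1 := ⟨p - 1, by omega⟩
    rw [Finset.prod_range_succ' (fun j => X - C (sVal (2 * (q + 1)) ((ωc (q + 1)) ^ (2 * j)))) q]
    have hterm : ∀ i ∈ Finset.range q,
        (X - C (sVal (2 * (q + 1)) ((ωc (q + 1)) ^ (2 * (i + 1))))) = X := by
      intro i hi
      simp only [Finset.mem_range] at hi
      rw [sVal_zero_eigen (q + 1) (by omega) (i + 1) (by omega) (by omega)]
      simp
    rw [Finset.prod_congr rfl hterm, Finset.prod_const, Finset.card_range,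
      show 2 * 0 = 0 from rfl, pow_zero, sVal_one (q + 1), Nat.add_sub_cancel]
    push_cast
    ring
  have hOdd : ∏ j ∈ Finset.range p, (X - C (sVal (2 * p) ((ωc p) ^ (2 * j + 1))))
      = ∏ j ∈ Finset.range p, gPoly p j := by
    refine Finset.prod_congr rfl fun j hj => ?_
    simp only [Finset.mem_range] at hj
    rw [sVal_odd_eigen p hp1 j hj, map_neg, sub_neg_eq_add, gPoly]
  rw [hEven, hOdd, prod_gPoly p hp1]
  -- now handle the RHS map
  have hC1 : Polynomial.map Complex.ofRealHom (X - C (((2 * p : ℕ) : ℝ) ^ 2 / 4))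
      = X - C ((p : ℂ) ^ 2) := by
    rw [Polynomial.map_sub, Polynomial.map_X, Polynomial.map_C]
    congr 1
    have : (((2 * p : ℕ) : ℝ) ^ 2 / 4) = (p : ℝ) ^ 2 := by push_cast; ring
    rw [this]
    simp [Complex.ofRealHom_eq_coe]
  have hCprod : Polynomial.map Complex.ofRealHom
        (∏ j ∈ Finset.Icc 1 (p / 2),
          (X + C ((Real.sin (Real.pi * (2 * j - 1) / (2 * p)))⁻¹ ^ 2)) ^ 2)
      = ∏ j ∈ Finset.range (p / 2), (gPoly p j) ^ 2 := by
    rw [Polynomial.map_prod]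
    rw [show Finset.Icc 1 (p / 2) = Finset.Ico 1 (p / 2 + 1) by
      ext a; simp [Nat.lt_succ_iff]]
    rw [Finset.prod_Ico_eq_prod_range]
    refine Finset.prod_congr rfl fun i hi => ?_
    have harg : Real.pi * (2 * ((1 + i : ℕ) : ℝ) - 1) / (2 * p)
        = Real.pi * (2 * (i : ℝ) + 1) / (2 * p) := by push_cast; ring
    rw [Polynomial.map_pow, Polynomial.map_add, Polynomial.map_X, Polynomial.map_C, gPoly, harg]
    norm_cast
  have hCite : Polynomial.map Complex.ofRealHom
        ((if Odd p then X + 1 else 1) : Polynomial ℝ)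
      = (if Odd p then X + 1 else 1) := by
    by_cases h : Odd p <;> simp [h]
  rw [Polynomial.map_mul, Polynomial.map_mul, Polynomial.map_mul, hC1, hCprod, hCite,
    Polynomial.map_pow, Polynomial.map_X]
  ring
end Aux2
end
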